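/- arXiv:2109.13552 — 6 statements merged into one kernel-verified Lean document; each statement's English description precedes it below -/
import Mathlib

section
/- Let d ≥ 2, let D ∈ ℂ[t] be squarefree of degree 2d, and let (A,B) be a solution of the Pell–Abel equation for D. Then the set of finite branch points of A² other than 0 and 1, namely { A(z)² : z ∈ ℂ and the derivative of the polynomial A² vanishes at z } \ {0, 1}, has cardinality at most d − 1. -/
/-!
Differentiating `A² = 1 + D B²` gives `2 A A' = B (D' B + 2 D B')`, and `A`, `B` are coprime, so
`A' = B C` for a polynomial `C`. Comparing degrees in the Pell–Abel equation gives
`deg A = d + deg B`, hence `deg C ≤ d - 1`. At a critical point `z` of `A²` with `A(z)² ∉ {0, 1}`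
we have `A'(z) = 0` and `B(z) ≠ 0`, so `z` is a root of `C`: the critical values in question are
images of the at most `d - 1` roots of `C`.
-/

open Polynomial

namespace Polynomial

section CommRing

variable {R : Type*} [CommRing R] {D A B : R[X]}

theorem isCoprime_of_sq_sub_mul_sq_eq_one (h : A ^ 2 - D * B ^ 2 = 1) : IsCoprime A B :=
  ⟨A, -(D * B), by linear_combination h⟩

theorem dvd_two_mul_derivative_of_sq_sub_mul_sq_eq_one (h : A ^ 2 - D * B ^ 2 = 1) :
    B ∣ 2 * derivative A := by
  have hderiv : A * (2 * derivative A) = B * (derivative D * B + 2 * D * derivative B) := by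
    have := congrArg derivative h
    simp only [derivative_sub, derivative_mul, derivative_sq, derivative_one, map_ofNat] at this
    linear_combination this
  exact (isCoprime_of_sq_sub_mul_sq_eq_one h).symm.dvd_of_dvd_mul_left ⟨_, hderiv⟩

theorem two_mul_natDegree_of_sq_sub_mul_sq_eq_one [IsDomain R] (h : A ^ 2 - D * B ^ 2 = 1)
    (hD : D ≠ 0) (hB : B ≠ 0) : 2 * A.natDegree = D.natDegree + 2 * B.natDegree := by
  have hA : A ^ 2 = D * B ^ 2 + C 1 := by rw [C_1]; linear_combination h
  have := congrArg natDegree hA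
  rw [natDegree_add_C, natDegree_mul hD (pow_ne_zero 2 hB), natDegree_pow, natDegree_pow] at this
  omega

end CommRing

variable {K : Type*} [Field K] [CharZero K] {D A B : K[X]}

theorem exists_derivative_eq_mul_of_sq_sub_mul_sq_eq_one (h : A ^ 2 - D * B ^ 2 = 1)
    (hD : 0 < D.natDegree) (hB : B ≠ 0) :
    ∃ C : K[X], C ≠ 0 ∧ derivative A = B * C ∧ 2 * (C.natDegree + 1) ≤ D.natDegree := by
  have hdegA := two_mul_natDegree_of_sq_sub_mul_sq_eq_one h (ne_zero_of_natDegree_gt hD) hB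
  have hA' : derivative A ≠ 0 := fun h0 ↦ by
    have := derivative_eq_zero.mp h0
    omega
  have htwo : IsUnit (2 : K[X]) := isUnit_C.mpr (isUnit_iff_ne_zero.mpr two_ne_zero)
  obtain ⟨C, hC⟩ := htwo.dvd_mul_left.mp (dvd_two_mul_derivative_of_sq_sub_mul_sq_eq_one h)
  have hC0 : C ≠ 0 := by rintro rfl; simp_all
  have hdegC : B.natDegree + C.natDegree ≤ A.natDegree - 1 := by
    rw [← natDegree_mul hB hC0, ← hC]
    exact natDegree_derivative_le A
  exact ⟨C, hC0, hC, by omega⟩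

theorem isRoot_of_isRoot_derivative_sq (h : A ^ 2 - D * B ^ 2 = 1) {C : K[X]}
    (hC : derivative A = B * C) {z : K} (hz : (derivative (A ^ 2)).IsRoot z)
    (h0 : A.eval z ^ 2 ≠ 0) (h1 : A.eval z ^ 2 ≠ 1) : C.IsRoot z := by
  have hAz : A.eval z ≠ 0 := fun hA ↦ h0 (by rw [hA]; ring)
  have hBz : B.eval z ≠ 0 := fun hB ↦ h1 <| by
    have := congrArg (eval z) h
    simp only [eval_sub, eval_mul, eval_pow, eval_one, hB] at this
    linear_combination this
  have hA'z : (derivative A).eval z = 0 := by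
    simpa [derivative_sq, hAz] using hz
  rw [hC, eval_mul] at hA'z
  exact (mul_eq_zero.mp hA'z).resolve_left hBz

end Polynomial

theorem stmt3_general (d : ℕ) (hd : 2 ≤ d) (D A B : Polynomial ℂ)
    (hdeg : D.natDegree = 2*d)
    (hB : B ≠ 0) (hPell : A ^ 2 - D * B ^ 2 = 1) :
    ({w : ℂ | ∃ z : ℂ, (Polynomial.derivative (A ^ 2)).eval z = 0 ∧ w = (A.eval z) ^ 2}
        \ {0, 1}).Finite ∧
    ({w : ℂ | ∃ z : ℂ, (Polynomial.derivative (A ^ 2)).eval z = 0 ∧ w = (A.eval z) ^ 2}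
        \ {0, 1}).ncard ≤ d - 1 := by
  obtain ⟨C, hC0, hAC, hdegC⟩ :=
    exists_derivative_eq_mul_of_sq_sub_mul_sq_eq_one hPell (by omega) hB
  have hsub : {w : ℂ | ∃ z : ℂ, (derivative (A ^ 2)).eval z = 0 ∧ w = (A.eval z) ^ 2} \ {0, 1}
      ⊆ (fun z ↦ A.eval z ^ 2) '' C.rootSet ℂ := by
    rintro w ⟨⟨z, hz, rfl⟩, hw⟩
    simp only [Set.mem_insert_iff, Set.mem_singleton_iff, not_or] at hw
    refine ⟨z, ?_, rfl⟩
    rw [mem_rootSet_of_ne hC0, coe_aeval_eq_eval]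
    exact isRoot_of_isRoot_derivative_sq hPell hAC hz hw.1 hw.2
  have hfin := (C.rootSet_finite ℂ).image (fun z ↦ A.eval z ^ 2)
  refine ⟨hfin.subset hsub, ?_⟩
  calc _ ≤ ((fun z ↦ A.eval z ^ 2) '' C.rootSet ℂ).ncard := Set.ncard_le_ncard hsub hfin
    _ ≤ (C.rootSet ℂ).ncard := Set.ncard_image_le (C.rootSet_finite ℂ)
    _ ≤ C.natDegree := C.ncard_rootSet_le ℂ
    _ ≤ d - 1 := by omega

theorem stmt3 (d : ℕ) (hd : 2 ≤ d) (D A B : Polynomial ℂ)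
    (hD : Squarefree D) (hdeg : D.natDegree = 2*d)
    (hB : B ≠ 0) (hPell : A ^ 2 - D * B ^ 2 = 1) :
    ({w : ℂ | ∃ z : ℂ, (Polynomial.derivative (A ^ 2)).eval z = 0 ∧ w = (A.eval z) ^ 2}
        \ {0, 1}).Finite ∧
    ({w : ℂ | ∃ z : ℂ, (Polynomial.derivative (A ^ 2)).eval z = 0 ∧ w = (A.eval z) ^ 2}
        \ {0, 1}).ncard ≤ d - 1 :=
  stmt3_general d hd D A B hdeg hB hPell
end

section
/- Let m ≥ 2 and let f_m be the m-th power polynomial. Then every z ∈ ℂ at which the derivative f_m′ vanishes satisfies f_m(z) ∈ {0, 1}. Moreover: if m is even, then every complex root of f_m has multiplicity exactly 2, while 0 and 1 are roots of f_m − 1 of multiplicity exactly 1 and every other complex root of f_m − 1 has multiplicity exactly 2; if m is odd, then 0 is a root of f_m of multiplicity exactly 1 and every other complex root of f_m has multiplicity exactly 2, while 1 is a root of f_m − 1 of multiplicity exactly 1 and every other complex root of f_m − 1 has multiplicity exactly 2. -/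
/-!
The power polynomial satisfies `w (w - 1) f' ^ 2 = m ^ 2 f (f - 1)`: differentiating
`f (X ^ 2) = T ^ 2` gives `X f' (X ^ 2) = T T'`, and `(X ^ 2 - 1) T' ^ 2 = m ^ 2 (T ^ 2 - 1)`
follows from `T' = m U_{m-1}` and the Pell identity `T ^ 2 - (X ^ 2 - 1) U_{m-1} ^ 2 = 1`.
At a critical point the right-hand side vanishes, so `f ∈ {0, 1}` there. At a root `z` of `f` or
of `f - 1` of multiplicity `k`, the left-hand side vanishes to order `[z = 0] + [z = 1] + 2 (k - 1)`
and the right-hand side to order `k`, whence `k = 2 - [z = 0] - [z = 1]`. Finally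
`f (1) = T (1) ^ 2 = 1` and `f (0) = T (0) ^ 2` is `1` or `0` according to the parity of `m`.
-/

open Polynomial

namespace Polynomial.Chebyshev

variable (R : Type*) [CommRing R]

theorem T_sq_sub_X_sq_sub_one_mul_U_sq (n : ℤ) :
    T R n ^ 2 - (X ^ 2 - 1) * U R (n - 1) ^ 2 = 1 := by
  -- `T n + U (n - 1) √(X ^ 2 - 1)` is multiplied by the norm-one element `X + √(X ^ 2 - 1)`.
  have step (n : ℤ) : T R (n + 1) ^ 2 - (X ^ 2 - 1) * U R n ^ 2 =
      T R n ^ 2 - (X ^ 2 - 1) * U R (n - 1) ^ 2 := by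
    have hT := T_eq_X_mul_T_sub_pol_U R (n - 1)
    have hU := U_eq_X_mul_U_add_T R (n - 1)
    rw [show n - 1 + 2 = n + 1 by ring, sub_add_cancel] at hT
    rw [sub_add_cancel] at hU
    rw [hT, hU]
    ring
  induction n using Int.induction_on with
  | zero => simp
  | succ n ih => rw [add_sub_cancel_right, step, ih]
  | pred n ih =>
    have h := step (-n - 1)
    rw [sub_add_cancel] at h
    rw [← h]
    exact ih

theorem X_sq_sub_one_mul_derivative_T_sq (n : ℤ) :
    (X ^ 2 - 1) * derivative (T R n) ^ 2 = (n : R[X]) ^ 2 * (T R n ^ 2 - 1) := by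
  rw [T_derivative_eq_U]
  linear_combination -(n : R[X]) ^ 2 * T_sq_sub_X_sq_sub_one_mul_U_sq R n

end Polynomial.Chebyshev

section

variable {R : Type*} [CommRing R] [IsDomain R]

theorem ne_one_of_comp_X_sq_eq_T_sq [NeZero (2 : R)] {n : ℤ} (hn : n ≠ 0) {f : R[X]}
    (hf : f.comp (X ^ 2) = Chebyshev.T R n ^ 2) : f ≠ 1 := by
  rintro rfl
  have := congrArg natDegree hf
  simp only [one_comp, natDegree_one, natDegree_pow, Chebyshev.natDegree_T] at this
  omega

theorem rootMultiplicity_X_mul_X_sub_one [DecidableEq R] (z : R) :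
    (X * (X - 1) : R[X]).rootMultiplicity z = if z = 0 ∨ z = 1 then 1 else 0 := by
  rw [show (X * (X - 1) : R[X]) = (X - C 0) * (X - C 1) by simp,
    rootMultiplicity_mul (mul_ne_zero (X_sub_C_ne_zero 0) (X_sub_C_ne_zero 1)),
    rootMultiplicity_X_sub_C, rootMultiplicity_X_sub_C]
  by_cases h0 : z = 0 <;> by_cases h1 : z = 1 <;> simp_all

variable [CharZero R]

theorem X_mul_X_sub_one_mul_derivative_sq_of_comp_X_sq_eq_T_sq (n : ℤ) {f : R[X]}
    (hf : f.comp (X ^ 2) = Chebyshev.T R n ^ 2) :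
    X * (X - 1) * derivative f ^ 2 = C ((n : R) ^ 2) * (f * (f - 1)) := by
  rw [← expand_eq_comp_X_pow] at hf
  have hd := congrArg derivative hf
  simp only [derivative_expand, derivative_sq, C_ofNat, Nat.cast_ofNat] at hd
  have hT := Chebyshev.X_sq_sub_one_mul_derivative_T_sq R n
  set T := Chebyshev.T R n
  apply expand_injective two_pos
  apply mul_left_cancel₀ (by norm_num : (4 : R[X]) ≠ 0)
  simp only [map_mul, map_sub, map_pow, map_one, expand_X, map_intCast] at hd ⊢
  linear_combination (X ^ 2 - 1) * (expand R 2 (derivative f) * (2 * X) + 2 * T * derivative T) * hd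
    + 4 * T ^ 2 * hT - 4 * (n : R[X]) ^ 2 * (expand R 2 f + T ^ 2 - 1) * hf

theorem rootMultiplicity_add_rootMultiplicity_eq_two {p q r : R[X]} {z : R} (hp : p ≠ 0)
    (hz : p.IsRoot z) (hq : ¬q.IsRoot z) (h : r * derivative p ^ 2 = p * q) :
    p.rootMultiplicity z + r.rootMultiplicity z = 2 := by
  have hpq : p * q ≠ 0 := mul_ne_zero hp (by rintro rfl; exact hq (by simp))
  have hr : r ≠ 0 := fun h0 ↦ hpq (by rw [← h, h0]; ring)
  have hp' : derivative p ≠ 0 := fun h0 ↦ hpq (by rw [← h, h0]; ring)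
  have hmult := congrArg (rootMultiplicity z) h
  rw [rootMultiplicity_mul hpq, rootMultiplicity_eq_zero hq, sq,
    rootMultiplicity_mul (by simp [hr, hp']), rootMultiplicity_mul (by simp [hp']),
    derivative_rootMultiplicity_of_root hz] at hmult
  have := (rootMultiplicity_pos hp).2 hz
  omega

end

section

variable {R : Type*} [CommRing R] [IsDomain R] {f : R[X]} {c : R}

theorem eval_eq_zero_or_eq_one_of_isRoot_derivative (hc : c ≠ 0)
    (h : X * (X - 1) * derivative f ^ 2 = C c * (f * (f - 1))) {z : R}
    (hz : (derivative f).IsRoot z) : f.eval z = 0 ∨ f.eval z = 1 := by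
  have := congrArg (eval z) h
  simp only [eval_mul, eval_pow, hz.eq_zero, eval_C, eval_sub, eval_one] at this
  simpa [hc, sub_eq_zero] using this

variable [CharZero R] [DecidableEq R]

theorem rootMultiplicity_eq_of_isRoot (hc : c ≠ 0)
    (h : X * (X - 1) * derivative f ^ 2 = C c * (f * (f - 1))) (hf : f ≠ 0) {z : R}
    (hz : f.IsRoot z) : f.rootMultiplicity z = if z = 0 ∨ z = 1 then 1 else 2 := by
  have := rootMultiplicity_add_rootMultiplicity_eq_two (r := X * (X - 1)) (q := C c * (f - 1))
    hf hz (by simp [hz.eq_zero, hc]) (by linear_combination h)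
  rw [rootMultiplicity_X_mul_X_sub_one] at this
  split_ifs at this ⊢ <;> omega

theorem rootMultiplicity_sub_one_eq_of_isRoot (hc : c ≠ 0)
    (h : X * (X - 1) * derivative f ^ 2 = C c * (f * (f - 1))) (hf : f ≠ 1) {z : R}
    (hz : (f - 1).IsRoot z) : (f - 1).rootMultiplicity z = if z = 0 ∨ z = 1 then 1 else 2 := by
  have hz1 : f.eval z = 1 := by simpa [sub_eq_zero] using hz.eq_zero
  have := rootMultiplicity_add_rootMultiplicity_eq_two (r := X * (X - 1)) (q := C c * f)
    (sub_ne_zero.2 hf) hz (by simp [hz1, hc])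
    (by rw [derivative_sub, derivative_one, sub_zero]; linear_combination h)
  rw [rootMultiplicity_X_mul_X_sub_one] at this
  split_ifs at this ⊢ <;> omega

end

theorem stmt6 (m : ℕ) (hm : 2 ≤ m) (f : Polynomial ℂ)
    (hf : f.comp (X ^ 2) = (Polynomial.Chebyshev.T ℂ (m : ℤ)) ^ 2) :
    (∀ z : ℂ, f.derivative.eval z = 0 → f.eval z = 0 ∨ f.eval z = 1) ∧
    (Even m →
      (∀ z : ℂ, f.eval z = 0 → Polynomial.rootMultiplicity z f = 2) ∧
      Polynomial.rootMultiplicity 0 (f - 1) = 1 ∧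
      Polynomial.rootMultiplicity 1 (f - 1) = 1 ∧
      (∀ z : ℂ, (f - 1).eval z = 0 → z ≠ 0 → z ≠ 1 →
        Polynomial.rootMultiplicity z (f - 1) = 2)) ∧
    (Odd m →
      Polynomial.rootMultiplicity 0 f = 1 ∧
      (∀ z : ℂ, f.eval z = 0 → z ≠ 0 → Polynomial.rootMultiplicity z f = 2) ∧
      Polynomial.rootMultiplicity 1 (f - 1) = 1 ∧
      (∀ z : ℂ, (f - 1).eval z = 0 → z ≠ 1 →
        Polynomial.rootMultiplicity z (f - 1) = 2)) := by
  have hm0 : (m : ℤ) ≠ 0 := by omega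
  have hc : ((m : ℤ) : ℂ) ^ 2 ≠ 0 := pow_ne_zero 2 (Int.cast_ne_zero.2 hm0)
  have hode := X_mul_X_sub_one_mul_derivative_sq_of_comp_X_sq_eq_T_sq (m : ℤ) hf
  have heval (x : ℂ) : f.eval (x ^ 2) = (Chebyshev.T ℂ m).eval x ^ 2 := by
    simpa [eval_comp] using congrArg (eval x) hf
  have hf1 : f.eval 1 = 1 := by simpa using heval 1
  have hmult (z : ℂ) (hz : f.IsRoot z) :=
    rootMultiplicity_eq_of_isRoot hc hode (by rintro rfl; simp at hf1) hz
  have hmult' (z : ℂ) (hz : (f - 1).IsRoot z) :=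
    rootMultiplicity_sub_one_eq_of_isRoot hc hode (ne_one_of_comp_X_sq_eq_T_sq hm0 hf) hz
  refine ⟨fun z ↦ eval_eq_zero_or_eq_one_of_isRoot_derivative hc hode,
    fun hm ↦ ?_, fun hm ↦ ?_⟩
  · have hf0 : f.eval 0 = 1 := by simpa [hm, ← pow_mul, pow_mul'] using heval 0
    refine ⟨fun z hz ↦ ?_, by simpa using hmult' 0 (by simp [hf0]),
      by simpa using hmult' 1 (by simp [hf1]),
      fun z hz hz0 hz1 ↦ by simpa [hz0, hz1] using hmult' z hz⟩
    have hz0 : z ≠ 0 := by rintro rfl; simp_all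
    have hz1 : z ≠ 1 := by rintro rfl; simp_all
    simpa [hz0, hz1] using hmult z hz
  · have hf0 : f.eval 0 = 0 := by simpa [hm] using heval 0
    refine ⟨by simpa using hmult 0 hf0, fun z hz hz0 ↦ ?_,
      by simpa using hmult' 1 (by simp [hf1]), fun z hz hz1 ↦ ?_⟩
    · have hz1 : z ≠ 1 := by rintro rfl; simp_all
      simpa [hz0, hz1] using hmult z hz
    · have hz0 : z ≠ 0 := by rintro rfl; simp_all
      simpa [hz0, hz1] using hmult' z hz
end

section
/- Let f ∈ ℂ[t] be a nonconstant polynomial, let ℂ(x) be the field of rational functions in one variable x over ℂ, and let K be an intermediate field with ℂ(f(x)) ⊆ K ⊆ ℂ(x). Then there exist polynomials g, h ∈ ℂ[t] such that f = g ∘ h (composition of polynomials) and deg h = [ℂ(x) : K], the degree of ℂ(x) as a K-vector space. -/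
open Polynomial

noncomputable section AuxStmt7

namespace AuxStmt7

abbrev F := RatFunc ℂ
abbrev ι : Polynomial ℂ →+* F := algebraMap (Polynomial ℂ) F

def ph : Polynomial ℂ →+* Polynomial (Polynomial ℂ) := mapRingHom Polynomial.C
def ta : Polynomial (Polynomial ℂ) →+* Polynomial (Polynomial ℂ) := eval₂RingHom ph (C X)

lemma ta_C (a : Polynomial ℂ) : ta (C a) = ph a := eval₂_C _ _
lemma ta_X : ta X = C X := eval₂_X _ _
lemma ph_C (z : ℂ) : ph (C z) = C (C z) := by simp [ph]
lemma ph_X : ph X = X := by simp [ph]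
lemma ph_coeff (a : Polynomial ℂ) (e : ℕ) : (ph a).coeff e = C (a.coeff e) := coeff_map _ _

lemma ta_ph (a : Polynomial ℂ) : ta (ph a) = C a := by
  have : (ta.comp ph) = (Polynomial.C : Polynomial ℂ →+* Polynomial (Polynomial ℂ)) := by
    apply Polynomial.ringHom_ext
    · intro z
      simp [ph_C, ta_C]
    · simp [ph_X, ta_X]
  exact DFunLike.congr_fun this a

lemma ta_ta (P : Polynomial (Polynomial ℂ)) : ta (ta P) = P := by
  have : (ta.comp ta) = RingHom.id _ := by
    apply Polynomial.ringHom_ext'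
    · apply Polynomial.ringHom_ext
      · intro z
        simp [ta_C, ph_C]
      · simp [ta_C, ph_X, ta_X]
    · simp [ta_X, ta_C, ph_X]
  exact DFunLike.congr_fun this P

lemma ta_inj : Function.Injective ta := Function.LeftInverse.injective ta_ta

lemma ph_inj : Function.Injective ph := map_injective _ Polynomial.C_injective

lemma natDegree_ph (a : Polynomial ℂ) : (ph a).natDegree = a.natDegree :=
  natDegree_map_eq_of_injective Polynomial.C_injective a

lemma ta_coeff_coeff (P : Polynomial (Polynomial ℂ)) (e j : ℕ) :
    ((ta P).coeff e).coeff j = (P.coeff j).coeff e := by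
  induction P using Polynomial.induction_on' with
  | add p q hp hq => simp [hp, hq]
  | monomial i a =>
      have h1 : ta ((monomial i) a) = ph a * C (X ^ i) := by
        rw [← C_mul_X_pow_eq_monomial, map_mul, ta_C, map_pow]
        simp [ta]
      rw [h1, coeff_mul_C, coeff_monomial]
      simp only [ph, coe_mapRingHom, coeff_map]
      rw [coeff_C_mul, coeff_X_pow]
      by_cases h : j = i
      · subst h; simp
      · rw [if_neg h, if_neg (fun hh => h hh.symm)]; simp

lemma natDegree_ph_sub_C (h : Polynomial ℂ) (hn : 0 < h.natDegree) :
    (ph h - C h).natDegree = h.natDegree := by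
  rw [natDegree_sub_eq_left_of_natDegree_lt, natDegree_ph]
  rw [natDegree_ph, natDegree_C]; exact hn

lemma eval_C_ph (b : Polynomial ℂ) (α : ℂ) : (ph b).eval (C α) = C (b.eval α) := by
  have h1 : (ph b).eval (C α) = eval₂ Polynomial.C (C α) b := by
    rw [ph, coe_mapRingHom, eval_map]
  rw [h1]
  have h2 := Polynomial.hom_eval₂ b (RingHom.id ℂ) (Polynomial.C : ℂ →+* Polynomial ℂ) α
  simpa using h2.symm

lemma aeval_X_eq (p : Polynomial ℂ) : Polynomial.aeval (RatFunc.X) p = ι p := by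
  rw [← RatFunc.algebraMap_X, Polynomial.aeval_algebraMap_apply]
  simp

lemma algC_eq : (algebraMap ℂ F) = ι.comp (Polynomial.C : ℂ →+* Polynomial ℂ) := by
  rw [IsScalarTower.algebraMap_eq ℂ (Polynomial ℂ) F]
  rfl

/-- the scaled "c(T) - c(x)" polynomial in ℂ[x][T] -/
def QA (c : Polynomial ℂ) : Polynomial (Polynomial ℂ) :=
  C (C c.leadingCoeff⁻¹) * (ph c - C c)

lemma QA_leading (c : Polynomial ℂ) (hc : 0 < c.natDegree) :
    (ph c - C c).leadingCoeff = C c.leadingCoeff := by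
  rw [leadingCoeff, natDegree_ph_sub_C c hc, coeff_sub, ph_coeff, coeff_C,
    if_neg (by omega), sub_zero, ← leadingCoeff]

lemma QA_monic (c : Polynomial ℂ) (hc : 0 < c.natDegree) : (QA c).Monic := by
  have hlc : c.leadingCoeff ≠ 0 := leadingCoeff_ne_zero.mpr (fun h => by simp [h] at hc)
  rw [QA, Monic, leadingCoeff_mul, leadingCoeff_C, QA_leading c hc, ← map_mul,
    inv_mul_cancel₀ hlc, map_one]

lemma QA_natDegree (c : Polynomial ℂ) (hc : 0 < c.natDegree) :
    (QA c).natDegree = c.natDegree := by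
  have hlc : (C c.leadingCoeff⁻¹ : Polynomial ℂ) ≠ 0 := by
    have : c.leadingCoeff ≠ 0 := leadingCoeff_ne_zero.mpr (fun h => by simp [h] at hc)
    simp [this]
  rw [QA, natDegree_C_mul hlc, natDegree_ph_sub_C c hc]

lemma QA_map (c : Polynomial ℂ) :
    (QA c).map ι =
      C ((algebraMap ℂ F c.leadingCoeff)⁻¹) * (c.map (algebraMap ℂ F) - C (ι c)) := by
  rw [QA, Polynomial.map_mul, Polynomial.map_sub, map_C, map_C]
  have h1 : ι (C c.leadingCoeff⁻¹) = (algebraMap ℂ F c.leadingCoeff)⁻¹ := by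
    rw [algC_eq]
    simp [map_inv₀]
  have h2 : (ph c).map ι = c.map (algebraMap ℂ F) := by
    rw [ph, coe_mapRingHom, map_map, algC_eq]
  rw [h1, h2]

lemma digits (h : Polynomial ℂ) (hm : h.Monic) (hn : 0 < h.natDegree) (f : Polynomial ℂ) :
    ∃ D : Polynomial (Polynomial ℂ), (∀ i, (D.coeff i).natDegree < h.natDegree) ∧ D.eval h = f := by
  generalize hd : f.natDegree = d
  induction d using Nat.strong_induction_on generalizing f with
  | _ d ih =>
    by_cases hfd : f.natDegree < h.natDegree
    · refine ⟨C f, fun i => ?_, by simp⟩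
      rcases eq_or_ne i 0 with rfl | hi
      · simpa using hfd
      · simp [coeff_C, hi, hn]
    · push_neg at hfd
      have hf0 : f ≠ 0 := by
        intro h0; rw [h0] at hfd; simp at hfd; omega
      have hq : (f /ₘ h).natDegree < d := by
        subst hd
        have h2 := degree_divByMonic_lt f h hf0 (by rwa [← natDegree_pos_iff_degree_pos])
        rcases eq_or_ne (f /ₘ h) 0 with h0 | h0
        · rw [h0]; simpa [natDegree_pos_iff_degree_pos] using lt_of_lt_of_le hn hfd
        · exact natDegree_lt_natDegree h0 h2
      obtain ⟨D', hD', hev⟩ := ih _ hq (f /ₘ h) rfl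
      have hr : (f %ₘ h).natDegree < h.natDegree := by
        rcases eq_or_ne (f %ₘ h) 0 with h0 | h0
        · rw [h0]; simpa using hn
        · exact natDegree_lt_natDegree h0 (degree_modByMonic_lt f hm)
      refine ⟨C (f %ₘ h) + X * D', fun i => ?_, ?_⟩
      · rcases Nat.eq_zero_or_pos i with rfl | hi
        · simpa [coeff_C, mul_coeff_zero] using hr
        · obtain ⟨j, rfl⟩ := Nat.exists_eq_succ_of_ne_zero hi.ne'
          simpa [coeff_C, coeff_X_mul] using hD' j
      · have h2 := modByMonic_add_div f h
        simp only [eval_add, eval_C, eval_mul, eval_X, hev]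
        linear_combination h2

lemma comp_of_dvd (h : Polynomial ℂ) (hm : h.Monic) (hn : 0 < h.natDegree) (f : Polynomial ℂ)
    (hdvd : (ph h - C h) ∣ (ph f - C f)) : ∃ g : Polynomial ℂ, f = g.comp h := by
  obtain ⟨D, hD, hev⟩ := digits h hm hn f
  set n := h.natDegree with hndef
  set N := D.natDegree with hNdef
  set a : ℕ → Polynomial ℂ := fun i => D.coeff i with ha
  have hphf : ph f = ∑ i ∈ Finset.range (N + 1), ph (a i) * (ph h) ^ i := by
    rw [← hev, eval_eq_sum_range, map_sum]
    simp [map_mul, map_pow]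
    rfl
  have hCf : (C f : Polynomial (Polynomial ℂ)) =
      ∑ i ∈ Finset.range (N + 1), C (a i) * (C h) ^ i := by
    rw [← hev, eval_eq_sum_range, map_sum]
    simp [map_mul, map_pow]
    rfl
  set E : Polynomial (Polynomial ℂ) :=
    ∑ i ∈ Finset.range (N + 1), (ph (a i) - C (a i)) * (C h) ^ i with hE
  have hEdvd : (ph h - C h) ∣ E := by
    have h1 : (ph h - C h) ∣ ∑ i ∈ Finset.range (N + 1), ph (a i) * ((ph h) ^ i - (C h) ^ i) :=
      Finset.dvd_sum fun i _ => Dvd.dvd.mul_left (sub_dvd_pow_sub_pow _ _ i) _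
    have h2 : E = (ph f - C f) - ∑ i ∈ Finset.range (N + 1), ph (a i) * ((ph h) ^ i - (C h) ^ i) := by
      rw [hphf, hCf, ← Finset.sum_sub_distrib, ← Finset.sum_sub_distrib]
      exact Finset.sum_congr rfl fun i _ => by ring
    rw [h2]
    exact dvd_sub hdvd h1
  have hEdeg : E.natDegree ≤ n - 1 := by
    apply natDegree_sum_le_of_forall_le
    intro i _
    refine le_trans (natDegree_mul_le) ?_
    have h1 : (ph (a i) - C (a i)).natDegree ≤ n - 1 := by
      refine le_trans (natDegree_sub_le _ _) ?_
      simp only [natDegree_ph, natDegree_C]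
      have h3 : (a i).natDegree < n := hD i
      omega
    have h2 : ((C h : Polynomial (Polynomial ℂ)) ^ i).natDegree = 0 := by
      rw [← map_pow, natDegree_C]
    omega
  have hE0 : E = 0 := by
    by_contra hne
    have := natDegree_le_of_dvd hEdvd hne
    rw [natDegree_ph_sub_C h hn] at this
    omega
  -- extract coefficients
  have hcoe : ∀ e, 1 ≤ e → ∀ j, (a j).coeff e = 0 := by
    intro e he
    have h1 : (0 : Polynomial ℂ) = ∑ i ∈ Finset.range (N + 1), C ((a i).coeff e) * h ^ i := by
      have := congrArg (fun P => Polynomial.coeff P e) hE0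
      simp only [hE, finset_sum_coeff, coeff_zero] at this
      rw [← this]
      apply Finset.sum_congr rfl
      intro i _
      rw [← map_pow, coeff_mul_C, coeff_sub, ph_coeff, coeff_C, if_neg (by omega)]
      ring
    set G : Polynomial ℂ := ∑ i ∈ Finset.range (N + 1), monomial i ((a i).coeff e) with hG
    have hGcomp : G.comp h = 0 := by
      rw [hG, Polynomial.sum_comp]
      simp only [monomial_comp]
      exact h1.symm
    have hG0 : G = 0 := by
      rcases comp_eq_zero_iff.mp hGcomp with h0 | ⟨_, h0⟩
      · exact h0
      · exfalso
        have : h.natDegree = 0 := by rw [h0]; simp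
        omega
    intro j
    by_cases hj : j ≤ N
    · have := congrArg (fun P => Polynomial.coeff P j) hG0
      simp only [hG, finset_sum_coeff, coeff_monomial, coeff_zero] at this
      rwa [Finset.sum_ite_eq' (Finset.range (N + 1)) j, if_pos (Finset.mem_range.mpr (by omega))] at this
    · have : a j = 0 := coeff_eq_zero_of_natDegree_lt (by omega)
      rw [this, coeff_zero]
  have hconst : ∀ j, a j = C ((a j).coeff 0) := by
    intro j
    ext e
    rcases Nat.eq_zero_or_pos e with rfl | he
    · simp
    · rw [hcoe e he j, coeff_C, if_neg (by omega)]
  refine ⟨∑ i ∈ Finset.range (N + 1), monomial i ((a i).coeff 0), ?_⟩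
  rw [← hev, eval_eq_sum_range, Polynomial.sum_comp]
  simp only [monomial_comp]
  exact Finset.sum_congr rfl fun i _ => by rw [← hconst i]

end AuxStmt7

end AuxStmt7


open AuxStmt7 in
theorem stmt7 (f : Polynomial ℂ) (hf : 0 < f.natDegree)
    (K : IntermediateField ℂ (RatFunc ℂ))
    (hK : IntermediateField.adjoin ℂ {Polynomial.aeval RatFunc.X f} ≤ K) :
    ∃ g h : Polynomial ℂ, f = g.comp h ∧
      h.natDegree = Module.finrank K (RatFunc ℂ) := by
  set x : F := RatFunc.X with hx
  have hf0 : f ≠ 0 := fun h => by simp [h] at hf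
  have hlc : f.leadingCoeff ≠ 0 := leadingCoeff_ne_zero.mpr hf0
  have hyK : Polynomial.aeval x f ∈ K := hK (IntermediateField.mem_adjoin_simple_self ℂ _)
  set y : K := ⟨Polynomial.aeval x f, hyK⟩ with hy
  -- Step 1 : x is integral over K
  set pK : Polynomial K := C ((algebraMap ℂ K f.leadingCoeff)⁻¹) * (f.map (algebraMap ℂ K) - C y)
    with hpK
  have hmapdeg : (f.map (algebraMap ℂ K)).natDegree = f.natDegree :=
    natDegree_map_eq_of_injective (algebraMap ℂ K).injective f
  have hsubdeg : (f.map (algebraMap ℂ K) - C y).natDegree = f.natDegree := by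
    rw [natDegree_sub_eq_left_of_natDegree_lt, hmapdeg]
    rw [hmapdeg, natDegree_C]; exact hf
  have halgK : algebraMap ℂ K f.leadingCoeff ≠ 0 := by
    simpa using (FaithfulSMul.algebraMap_injective ℂ K).ne_iff.mpr hlc
  have hpKmonic : pK.Monic := by
    have h1 : (f.map (algebraMap ℂ K) - C y).leadingCoeff = algebraMap ℂ K f.leadingCoeff := by
      rw [leadingCoeff, hsubdeg, coeff_sub, coeff_C, if_neg (by omega), sub_zero,
        coeff_map, ← leadingCoeff]
    rw [hpK, Monic, leadingCoeff_mul, leadingCoeff_C, h1, inv_mul_cancel₀ halgK]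
  have hpKeval : Polynomial.aeval x pK = 0 := by
    rw [hpK]
    simp only [map_mul, map_sub, Polynomial.aeval_C, Polynomial.aeval_map_algebraMap]
    have : (algebraMap K F) y = Polynomial.aeval x f := rfl
    rw [this, sub_self, mul_zero]
  have hxint : IsIntegral K x := ⟨pK, hpKmonic, by rwa [← Polynomial.aeval_def]⟩
  -- Step 2 : finrank = natDegree of minpoly
  have htop : IntermediateField.adjoin K {x} = ⊤ := by
    rw [eq_top_iff]
    intro z _
    have hpoly : ∀ p : Polynomial ℂ, ι p ∈ IntermediateField.adjoin K {x} := by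
      intro p
      have h1 : Polynomial.aeval x (p.map (algebraMap ℂ K)) = ι p := by
        rw [Polynomial.aeval_map_algebraMap, hx, aeval_X_eq]
      have h2 := Polynomial.aeval_mem_adjoin_singleton K x (p := p.map (algebraMap ℂ K))
      rw [h1] at h2
      exact IntermediateField.algebra_adjoin_le_adjoin K {x} h2
    rw [← RatFunc.num_div_denom z]
    exact div_mem (hpoly _) (hpoly _)
  have hrank : Module.finrank K F = (minpoly K x).natDegree := by
    rw [← IntermediateField.adjoin.finrank hxint]
    have h2 : IntermediateField.adjoin K {x} = (⊤ : IntermediateField K F) := htop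
    rw [h2]
    exact (IntermediateField.topEquiv.toLinearEquiv.finrank_eq).symm
  set m : Polynomial K := minpoly K x with hm
  set n : ℕ := m.natDegree with hn
  have hn1 : 0 < n := minpoly.natDegree_pos hxint
  set mF : Polynomial F := m.map (algebraMap K F) with hmF
  have hmFmonic : mF.Monic := (minpoly.monic hxint).map _
  -- Step 3 : descend the minimal polynomial to ℂ[x][T]
  have hKmapQA : ∀ (c : Polynomial ℂ) (z : K), algebraMap K F z = ι c →
      (C ((algebraMap ℂ K c.leadingCoeff)⁻¹) * (c.map (algebraMap ℂ K) - C z)).map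
        (algebraMap K F) = (QA c).map ι := by
    intro c z hz
    rw [QA_map, Polynomial.map_mul, Polynomial.map_sub, map_C, map_C, hz, map_map,
      ← IsScalarTower.algebraMap_eq ℂ K F, map_inv₀, ← IsScalarTower.algebraMap_apply ℂ K F]
  have hdvd_pF : mF ∣ (QA f).map ι := by
    have h1 : m ∣ pK := minpoly.dvd K x hpKeval
    have h2 := Polynomial.map_dvd (algebraMap K F) h1
    rwa [hKmapQA f y (by rw [show (algebraMap K F) y = Polynomial.aeval x f from rfl, hx, aeval_X_eq])] at h2
  have ιinj : Function.Injective ι := RatFunc.algebraMap_injective ℂ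
  -- pull back the minimal polynomial to ℂ[x][T]
  obtain ⟨M, hM⟩ := IsIntegrallyClosed.eq_map_mul_C_of_dvd F (QA_monic f hf) hdvd_pF
  rw [hmFmonic.leadingCoeff, C_1, mul_one] at hM
  have hMι : M.map ι = mF := hM
  have hMmonic : M.Monic := Polynomial.monic_of_injective ιinj (by rw [hMι]; exact hmFmonic)
  have hM0 : M ≠ 0 := hMmonic.ne_zero
  have hpull : ∀ P : Polynomial (Polynomial ℂ), P.Monic → mF ∣ P.map ι →
      ∃ S : Polynomial (Polynomial ℂ), S.Monic ∧ P = M * S := by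
    intro P hPm hPd
    obtain ⟨w, hw⟩ := hPd
    have hwm : w.Monic := hmFmonic.of_mul_monic_left (by rw [← hw]; exact hPm.map ι)
    have hwd : w ∣ P.map ι := ⟨mF, by rw [hw, mul_comm]⟩
    obtain ⟨S, hS⟩ := IsIntegrallyClosed.eq_map_mul_C_of_dvd F hPm hwd
    rw [hwm.leadingCoeff, C_1, mul_one] at hS
    have hSm : S.Monic := Polynomial.monic_of_injective ιinj (by rw [hS]; exact hwm)
    refine ⟨S, hSm, Polynomial.map_injective ι ιinj ?_⟩
    rw [Polynomial.map_mul, hS, hMι, ← hw]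
  obtain ⟨Q, hQmon, hPQ⟩ := hpull (QA f) (QA_monic f hf) hdvd_pF
  have hMdeg : M.natDegree = n := by
    have h1 : (M.map ι).natDegree = M.natDegree :=
      natDegree_map_eq_of_injective ιinj M
    have h2 : mF.natDegree = n := by
      rw [hmF]
      exact natDegree_map_eq_of_injective (algebraMap K F).injective m
    rw [← h1, hMι, h2]
  -- Step 5 : M has a nonconstant coefficient
  have hex : ∃ i, (M.coeff i).natDegree ≠ 0 := by
    by_contra hall
    push_neg at hall
    set N₀ : Polynomial ℂ := M.map (evalRingHom (0 : ℂ)) with hN₀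
    have hev : Polynomial.eval x (M.map ι) = 0 := by
      rw [hMι, hmF, eval_map, ← Polynomial.aeval_def]
      exact minpoly.aeval K x
    have h2 : Polynomial.eval x (M.map ι) = Polynomial.aeval x N₀ := by
      rw [eval_map, Polynomial.aeval_def]
      rw [Polynomial.eval₂_eq_sum_range,
        Polynomial.eval₂_eq_sum_range' (algebraMap ℂ F)
          (lt_of_le_of_lt natDegree_map_le (Nat.lt_succ_self M.natDegree)) x]
      apply Finset.sum_congr rfl
      intro j _
      obtain ⟨z, hz⟩ := natDegree_eq_zero.mp (hall j)
      rw [coeff_map, ← hz, coe_evalRingHom, eval_C, algC_eq]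
      rfl
    have h3 : ι N₀ = 0 := by
      rw [← aeval_X_eq, ← hx, ← h2, hev]
    have h4 : N₀ = 0 := ιinj (by simpa using h3)
    have h5 : N₀.coeff M.natDegree = 1 := by
      rw [hN₀, coeff_map, hMmonic.coeff_natDegree, coe_evalRingHom, eval_one]
    rw [h4] at h5
    simp at h5
  obtain ⟨i, hi⟩ := hex
  set c : Polynomial ℂ := M.coeff i with hc
  set k : ℕ := c.natDegree with hk
  have hk1 : 0 < k := Nat.pos_of_ne_zero hi
  have hc0 : c ≠ 0 := fun h0 => hi (by rw [hk, h0, natDegree_zero])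
  have hclc : c.leadingCoeff ≠ 0 := leadingCoeff_ne_zero.mpr hc0
  -- Step 6 : the coefficient gives a polynomial relation
  set cK : K := m.coeff i with hcK
  have hcKF : algebraMap K F cK = ι c := by
    have h1 : mF.coeff i = algebraMap K F (m.coeff i) := by rw [hmF, coeff_map]
    have h2 : mF.coeff i = ι (M.coeff i) := by rw [← hMι, coeff_map]
    rw [hcK, ← h1, h2]
  set Dk : Polynomial K :=
    C ((algebraMap ℂ K c.leadingCoeff)⁻¹) * (c.map (algebraMap ℂ K) - C cK) with hDk
  have hDkeval : Polynomial.aeval x Dk = 0 := by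
    rw [hDk]
    simp only [map_mul, map_sub, Polynomial.aeval_C, Polynomial.aeval_map_algebraMap]
    rw [hcKF, hx, aeval_X_eq, sub_self, mul_zero]
  have hdvd_DF : mF ∣ (QA c).map ι := by
    have h1 : m ∣ Dk := minpoly.dvd K x hDkeval
    have h2 := Polynomial.map_dvd (algebraMap K F) h1
    rwa [hDk, hKmapQA c cK hcKF] at h2
  obtain ⟨S, hSmon, hDS⟩ := hpull (QA c) (QA_monic c hk1) hdvd_DF
  have hS0 : S ≠ 0 := hSmon.ne_zero
  -- Step 7 : degree computations via the transpose map
  have hCu0 : (C c.leadingCoeff⁻¹ : Polynomial ℂ) ≠ 0 := by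
    simp [inv_ne_zero hclc]
  have htaQA : ta (QA c) = C (C c.leadingCoeff⁻¹) * (C c - ph c) := by
    rw [QA, map_mul, map_sub, ta_C, ph_C, ta_ph, ta_C]
  have htaQAdeg : (ta (QA c)).natDegree = k := by
    rw [htaQA, natDegree_C_mul hCu0, ← natDegree_neg, neg_sub, natDegree_ph_sub_C c hk1]
  have htaM0 : ta M ≠ 0 := fun h0 => hM0 (ta_inj (by simpa using h0))
  have htaS0 : ta S ≠ 0 := fun h0 => hS0 (ta_inj (by simpa using h0))
  have hsum : k = (ta M).natDegree + (ta S).natDegree := by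
    have h1 := congrArg ta hDS
    rw [map_mul] at h1
    rw [← htaQAdeg, h1, natDegree_mul htaM0 htaS0]
  have hge : k ≤ (ta M).natDegree := by
    apply le_natDegree_of_ne_zero
    intro h0
    apply hclc
    have h1 := ta_coeff_coeff M k i
    rw [h0] at h1
    have h2 : c.coeff k = 0 := by rw [hc, ← h1]; simp
    rw [leadingCoeff, ← hk]
    exact h2
  have htaS : (ta S).natDegree = 0 := by omega
  obtain ⟨s, hs⟩ := natDegree_eq_zero.mp htaS
  have hSph : S = ph s := by rw [← ta_ta S, ← hs, ta_C]
  have hdegS : S.natDegree = s.natDegree := by rw [hSph, natDegree_ph]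
  have hkn : k = n + S.natDegree := by
    rw [hk, ← QA_natDegree c hk1, hDS, natDegree_mul hM0 hS0, hMdeg]
  have hS_deg0 : S.natDegree = 0 := by
    by_contra hne
    have hspos : 0 < s.degree := by
      rw [← natDegree_pos_iff_degree_pos]
      omega
    obtain ⟨α, hα⟩ := Complex.exists_root hspos
    have h1 := congrArg (Polynomial.eval (C α)) hDS
    rw [QA, eval_mul, eval_mul, eval_C, eval_sub, eval_C, eval_C_ph, hSph, eval_C_ph,
      hα, map_zero, mul_zero] at h1
    have h2 : C (c.eval α) - c = 0 := by
      rcases mul_eq_zero.mp h1 with h3 | h3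
      · exact absurd (by simpa using h3) (inv_ne_zero hclc)
      · exact h3
    have h3 : c = C (c.eval α) := by linear_combination -h2
    have h4 : c.natDegree = 0 := by rw [h3, natDegree_C]
    omega
  have hk_eq_n : k = n := by omega
  have hS1 : S = 1 := (Monic.natDegree_eq_zero hSmon).mp hS_deg0
  -- Step 8 : M = ph h - C h for a monic polynomial h of degree n
  set hp : Polynomial ℂ := C c.leadingCoeff⁻¹ * c with hhp
  have hhdeg : hp.natDegree = n := by
    rw [hhp, natDegree_C_mul (inv_ne_zero hclc), ← hk, hk_eq_n]
  have hMeq : M = ph hp - C hp := by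
    have h1 : M = QA c := by rw [hDS, hS1, mul_one]
    rw [h1, QA, hhp, map_mul, ph_C, map_mul, mul_sub]
  have hhmonic : hp.Monic := by
    rw [Monic, hhp, leadingCoeff_mul, leadingCoeff_C, inv_mul_cancel₀ hclc]
  have hhn : 0 < hp.natDegree := by rw [hhdeg]; exact hn1
  -- Step 9 : (ph hp - C hp) divides (ph f - C f)
  have hdvdf : (ph hp - C hp) ∣ (ph f - C f) := by
    have h1 : M ∣ QA f := Dvd.intro _ hPQ.symm
    have h2 : (ph f - C f) = C (C f.leadingCoeff) * QA f := by
      rw [QA, ← mul_assoc, ← map_mul, ← map_mul, mul_inv_cancel₀ hlc, map_one, map_one, one_mul]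
    rw [hMeq] at h1
    rw [h2]
    exact h1.mul_left _
  obtain ⟨g, hg⟩ := comp_of_dvd hp hhmonic hhn f hdvdf
  exact ⟨g, hp, hg, by rw [hhdeg, hrank]⟩
end

section
/- Let n ≥ 2. The number of equivalence classes, under simultaneous conjugation by elements of S_{2n}, of admissible 4-tuples (σ0, σ∞, σ1, τ) such that σ1 and τ are disjoint permutations equals ⌊n/2⌋. -/
/-- A 4-tuple `(σ0, σ∞, σ1, τ)` of permutations of `{1,…,2n}` (realized as permutations of `ℕ`
supported on `{1,…,2n}`) is admissible if `σ0·σ∞·σ1·τ = 1`, `σ0` is a product of `n` disjoint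
transpositions (a fixed-point-free involution of `{1,…,2n}`), `σ∞` is a `2n`-cycle, `σ1` is a
product of `n-2` disjoint transpositions, and `τ` is a transposition. -/
def IsAdmissible (n : ℕ) (σ0 σi σ1 τ : Equiv.Perm ℕ) : Prop :=
  σ0 * σi * σ1 * τ = 1 ∧
  σ0 * σ0 = 1 ∧ {x | σ0 x ≠ x} = Set.Icc 1 (2*n) ∧
  σi.IsCycle ∧ {x | σi x ≠ x} = Set.Icc 1 (2*n) ∧
  σ1 * σ1 = 1 ∧ {x | σ1 x ≠ x} ⊆ Set.Icc 1 (2*n) ∧ {x | σ1 x ≠ x}.ncard = 2*(n-2) ∧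
  ∃ a b, a ≠ b ∧ a ∈ Set.Icc 1 (2*n) ∧ b ∈ Set.Icc 1 (2*n) ∧ τ = Equiv.swap a b

namespace Stmt14
open Equiv Equiv.Perm

variable {N : ℕ}

def A (a : ZMod N) : Perm (ZMod N) :=
  ⟨fun x => a + x, fun x => -a + x, fun x => by simp, fun x => by simp⟩

def R (a : ZMod N) : Perm (ZMod N) :=
  ⟨fun x => a - x, fun x => a - x, fun x => by simp, fun x => by simp⟩

@[simp] lemma A_apply (a x : ZMod N) : A a x = a + x := rfl
@[simp] lemma R_apply (a x : ZMod N) : R a x = a - x := rfl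

lemma A_mul (a b : ZMod N) : A a * A b = A (a + b) := by
  ext x; simp [A, Perm.mul_apply, add_assoc]

@[simp] lemma A_zero : (A 0 : Perm (ZMod N)) = 1 := by ext x; simp [A]

@[simp] lemma A_inv (a : ZMod N) : (A a)⁻¹ = A (-a) := by
  refine inv_eq_of_mul_eq_one_right ?_
  rw [A_mul]; simp

lemma R_mul_R (a b : ZMod N) : R a * R b = A (a - b) := by
  ext x; simp [A, R, Perm.mul_apply]; ring

@[simp] lemma R_sq (a : ZMod N) : R a * R a = 1 := by
  rw [R_mul_R]; simp

@[simp] lemma R_inv (a : ZMod N) : (R a)⁻¹ = R a := by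
  exact inv_eq_of_mul_eq_one_right (R_sq a)

lemma R_mul_A (a b : ZMod N) : R a * A b = R (a - b) := by
  ext x; simp [A, R, Perm.mul_apply]; ring

lemma A_mul_R (a b : ZMod N) : A b * R a = R (a + b) := by
  ext x; simp [A, R, Perm.mul_apply]; ring

lemma conj_R (a j : ZMod N) : (A j)⁻¹ * R a * A j = R (a - 2*j) := by
  rw [A_inv, mul_assoc, R_mul_A, A_mul_R]; ring_nf

lemma conj_A (a j : ZMod N) : (A j)⁻¹ * A a * A j = A a := by
  rw [A_inv, A_mul, A_mul]; ring_nf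

lemma conj_swap {α : Type*} [DecidableEq α] (g : Perm α) (x y : α) :
    g⁻¹ * Equiv.swap x y * g = Equiv.swap (g⁻¹ x) (g⁻¹ y) := by
  rw [swap_apply_apply g⁻¹ x y]; simp [mul_assoc]

lemma A_one_pow [NeZero N] (m : ℕ) : (A (1 : ZMod N)) ^ m = A (m : ZMod N) := by
  induction m with
  | zero => simp
  | succ m ih => rw [pow_succ, ih, A_mul]; push_cast; ring_nf

lemma isCycle_A_one [NeZero N] (h1 : (1 : ZMod N) ≠ 0) : (A (1 : ZMod N)).IsCycle := by
  refine ⟨0, by simpa using h1, fun y hy => ?_⟩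
  refine ⟨(y.val : ℤ), ?_⟩
  rw [zpow_natCast, A_one_pow]
  simp [ZMod.natCast_val, ZMod.cast_id]

lemma centralizer_A_one [NeZero N] {g : Perm (ZMod N)} (hg : g * A 1 = A 1 * g) :
    g = A (g 0) := by
  have key : ∀ x, g (1 + x) = 1 + g x := by
    intro x
    have := Perm.ext_iff.1 hg x
    simpa [Perm.mul_apply] using this
  have nat : ∀ m : ℕ, g (m : ZMod N) = g 0 + m := by
    intro m
    induction m with
    | zero => simp
    | succ m ih =>
      push_cast
      rw [show ((m : ZMod N) + 1) = 1 + (m : ZMod N) by ring, key, ih]; ring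
  ext x
  have : g ((x.val : ℕ) : ZMod N) = g 0 + x.val := nat x.val
  simpa [ZMod.natCast_val, ZMod.cast_id] using this

lemma reflection_of [NeZero N] {σ : Perm (ZMod N)} (h2 : σ * σ = 1)
    (hc : σ * A 1 * σ = (A 1)⁻¹) : σ = R (σ 0) := by
  have hσσ : ∀ x, σ (σ x) = x := fun x => by
    have := Perm.ext_iff.1 h2 x; simpa [Perm.mul_apply] using this
  have key : ∀ x, σ (1 + x) = σ x - 1 := by
    intro x
    have := Perm.ext_iff.1 hc (σ x)
    simp only [Perm.mul_apply, A_inv, A_apply, hσσ] at this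
    rw [this]; ring
  have nat : ∀ m : ℕ, σ (m : ZMod N) = σ 0 - m := by
    intro m
    induction m with
    | zero => simp
    | succ m ih =>
      push_cast
      rw [show ((m : ZMod N) + 1) = 1 + (m : ZMod N) by ring, key, ih]; ring
  ext x
  have : σ ((x.val : ℕ) : ZMod N) = σ 0 - x.val := nat x.val
  simpa [ZMod.natCast_val, ZMod.cast_id] using this

section Main

variable {n : ℕ}

lemma neg_n (hn : 2 ≤ n) : -((n:ℕ) : ZMod (2*n)) = ((n:ℕ) : ZMod (2*n)) := by
  haveI : NeZero (2*n) := ⟨by omega⟩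
  rw [neg_eq_iff_add_eq_zero]
  have : (((n:ℕ) + n : ℕ) : ZMod (2*n)) = 0 := by
    rw [show n + n = 2*n by ring, ZMod.natCast_self]
  push_cast at this
  exact this

lemma extract (hn : 2 ≤ n) (u : ZMod (2*n)) (hu : u ≠ -u) :
    ∃ k : ℕ, 1 ≤ k ∧ k ≤ n/2 ∧ ∃ j : ZMod (2*n), 2*j = 0 ∧
      Equiv.swap (-j + u) (-j + -u)
        = Equiv.swap ((k : ZMod (2*n))) (-((k:ℕ) : ZMod (2*n))) := by
  haveI : NeZero (2*n) := ⟨by omega⟩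
  have hvlt : u.val < 2*n := ZMod.val_lt u
  have hcast : ((u.val : ℕ) : ZMod (2*n)) = u := by simp [ZMod.natCast_val, ZMod.cast_id]
  have hv0 : u.val ≠ 0 := by
    intro h
    apply hu
    have : u = 0 := by rw [← hcast, h]; simp
    rw [this]; simp
  have hvn : u.val ≠ n := by
    intro h
    apply hu
    rw [← hcast, h]
    exact (neg_n hn).symm
  have hnegn : -((n:ℕ) : ZMod (2*n)) = ((n:ℕ) : ZMod (2*n)) := neg_n hn
  have h2n : (((2*n : ℕ)) : ZMod (2*n)) = 0 := ZMod.natCast_self _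
  set v0 := u.val with hv0def
  have h2j : 2 * ((n:ℕ) : ZMod (2*n)) = 0 := by
    have : (((2*n : ℕ)) : ZMod (2*n)) = 2 * ((n:ℕ) : ZMod (2*n)) := by push_cast; ring
    rw [← this, h2n]
  rcases lt_or_gt_of_ne hvn with hlt | hgt
  · rcases le_or_gt (2*v0) n with hle | hlt2
    · -- k = v0, j = 0
      refine ⟨v0, by omega, by omega, 0, by ring, ?_⟩
      rw [hcast]; simp
    · -- k = n - v0, j = n
      refine ⟨n - v0, by omega, by omega, ((n:ℕ) : ZMod (2*n)), h2j, ?_⟩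
      have hk : (((n - v0 : ℕ)) : ZMod (2*n)) = ((n:ℕ) : ZMod (2*n)) - u := by
        rw [Nat.cast_sub (le_of_lt hlt), hcast]
      have h1 : -((n:ℕ) : ZMod (2*n)) + u = -(((n - v0 : ℕ)) : ZMod (2*n)) := by
        rw [hk]; ring
      have h2 : -((n:ℕ) : ZMod (2*n)) + -u = (((n - v0 : ℕ)) : ZMod (2*n)) := by
        rw [hk]; linear_combination hnegn
      rw [h1, h2, Equiv.swap_comm]
  · rcases le_or_gt (2*(v0 - n)) n with hle | hlt2
    · -- k = v0 - n, j = n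
      refine ⟨v0 - n, by omega, by omega, ((n:ℕ) : ZMod (2*n)), h2j, ?_⟩
      have hk : (((v0 - n : ℕ)) : ZMod (2*n)) = u - ((n:ℕ) : ZMod (2*n)) := by
        rw [Nat.cast_sub (le_of_lt hgt), hcast]
      have h1 : -((n:ℕ) : ZMod (2*n)) + u = (((v0 - n : ℕ)) : ZMod (2*n)) := by rw [hk]; ring
      have h2 : -((n:ℕ) : ZMod (2*n)) + -u = -(((v0 - n : ℕ)) : ZMod (2*n)) := by
        rw [hk]; linear_combination hnegn
      rw [h1, h2]
    · -- k = 2n - v0, j = 0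
      refine ⟨2*n - v0, by omega, by omega, 0, by ring, ?_⟩
      have hk : (((2*n - v0 : ℕ)) : ZMod (2*n)) = -u := by
        rw [Nat.cast_sub (le_of_lt hvlt), hcast, h2n]; ring
      rw [hk]; simp [Equiv.swap_comm]

theorem main (hn : 2 ≤ n) (σ0 σi σ1 τ : Perm (ZMod (2*n)))
    (hprod : σ0 * σi * σ1 * τ = 1) (h0sq : σ0 * σ0 = 1) (h0f : ∀ x, σ0 x ≠ x)
    (hiC : σi.IsCycle) (hif : ∀ x, σi x ≠ x) (h1sq : σ1 * σ1 = 1)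
    {a b : ZMod (2*n)} (hab : a ≠ b) (hτ : τ = Equiv.swap a b)
    (hdisj : σ1.Disjoint τ) :
    ∃ k : ℕ, 1 ≤ k ∧ k ≤ n/2 ∧ ∃ g : Perm (ZMod (2*n)),
      g⁻¹ * σ0 * g = R 1 ∧ g⁻¹ * σi * g = A 1 ∧
      g⁻¹ * σ1 * g = R 0 * Equiv.swap ((k : ZMod (2*n))) (-((k:ℕ):ZMod (2*n))) ∧
      g⁻¹ * τ * g = Equiv.swap ((k : ZMod (2*n))) (-((k:ℕ):ZMod (2*n))) := by
  haveI : NeZero (2*n) := ⟨by omega⟩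
  haveI : Fact (1 < 2*n) := ⟨by omega⟩
  have h1z : (1 : ZMod (2*n)) ≠ 0 := one_ne_zero
  -- step 1 : conjugate σi to A 1
  have hA1 : (A (1 : ZMod (2*n))).IsCycle := isCycle_A_one h1z
  have hAf : ∀ x : ZMod (2*n), A 1 x ≠ x := by
    intro x h
    rw [A_apply] at h
    apply h1z
    have h' : (1 : ZMod (2*n)) + x = 0 + x := by rw [zero_add]; exact h
    exact add_right_cancel h'
  have hsupσi : σi.support = Finset.univ := by
    ext x; simp [Perm.mem_support, hif x]
  have hsupA : (A (1 : ZMod (2*n))).support = Finset.univ := by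
    ext x; simp [Perm.mem_support, hAf x]
  obtain ⟨g1, hg1⟩ := isConj_iff.1 (hiC.isConj hA1 (by rw [hsupσi, hsupA]))
  -- conjugated tuple
  set s0 := g1 * σ0 * g1⁻¹ with hs0
  set s1 := g1 * σ1 * g1⁻¹ with hs1
  set t1 := g1 * τ * g1⁻¹ with ht1
  have hprod1 : s0 * A 1 * s1 * t1 = 1 := by
    rw [hs0, hs1, ht1, ← hg1]
    have : g1 * σ0 * g1⁻¹ * (g1 * σi * g1⁻¹) * (g1 * σ1 * g1⁻¹) * (g1 * τ * g1⁻¹)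
        = g1 * (σ0 * σi * σ1 * τ) * g1⁻¹ := by group
    rw [this, hprod]; group
  have hs0sq : s0 * s0 = 1 := by
    rw [hs0]
    have : g1 * σ0 * g1⁻¹ * (g1 * σ0 * g1⁻¹) = g1 * (σ0 * σ0) * g1⁻¹ := by group
    rw [this, h0sq]; group
  have hs1sq : s1 * s1 = 1 := by
    rw [hs1]
    have : g1 * σ1 * g1⁻¹ * (g1 * σ1 * g1⁻¹) = g1 * (σ1 * σ1) * g1⁻¹ := by group
    rw [this, h1sq]; group
  have hs0f : ∀ x, s0 x ≠ x := by
    intro x h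
    rw [hs0] at h
    simp only [Perm.mul_apply] at h
    apply h0f (g1⁻¹ x)
    apply g1.injective
    rw [h]
    simp
  have ht1sq : t1 * t1 = 1 := by
    rw [ht1]
    have : g1 * τ * g1⁻¹ * (g1 * τ * g1⁻¹) = g1 * (τ * τ) * g1⁻¹ := by group
    rw [this, hτ, Equiv.swap_mul_self]; group
  have hdisj1 : s1.Disjoint t1 := by
    intro x
    rcases hdisj (g1⁻¹ x) with h | h
    · left; rw [hs1]; simp only [Perm.mul_apply, h]; simp
    · right; rw [ht1]; simp only [Perm.mul_apply, h]; simp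
  -- (s0 * A1) is an involution
  have hst : s0 * A 1 = (s1 * t1)⁻¹ := by
    rw [eq_inv_iff_mul_eq_one]
    calc s0 * A 1 * (s1 * t1) = s0 * A 1 * s1 * t1 := by group
    _ = 1 := hprod1
  have hstsq : (s1 * t1) * (s1 * t1) = 1 := by
    have hc := hdisj1.commute
    calc s1 * t1 * (s1 * t1) = s1 * (t1 * s1) * t1 := by group
    _ = s1 * (s1 * t1) * t1 := by rw [hc.eq]
    _ = (s1 * s1) * (t1 * t1) := by group
    _ = 1 := by rw [hs1sq, ht1sq, one_mul]
  have h2 : (s0 * A 1) * (s0 * A 1) = 1 := by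
    rw [hst, ← mul_inv_rev, hstsq]; simp
  have hc : s0 * A 1 * s0 = (A 1)⁻¹ := by
    have : s0 * A 1 * s0 = (s0 * A 1 * s0 * A 1) * (A 1)⁻¹ := by group
    rw [this, show s0 * A 1 * s0 * A 1 = (s0 * A 1) * (s0 * A 1) by group, h2]
    group
  have hs0R : s0 = R (s0 0) := reflection_of hs0sq hc
  set a0 := s0 0 with ha0
  -- a0 is odd
  have ha0cast : ((a0.val : ℕ) : ZMod (2*n)) = a0 := by
    simp [ZMod.natCast_val, ZMod.cast_id]
  have hodd : a0.val % 2 = 1 := by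
    rcases Nat.mod_two_eq_zero_or_one a0.val with h | h
    · exfalso
      have h2d : 2 * (a0.val / 2) = a0.val := by omega
      have hq : ((2 * (a0.val / 2) : ℕ) : ZMod (2*n)) = a0 := by rw [h2d]; exact ha0cast
      push_cast at hq
      apply hs0f (((a0.val/2 : ℕ)) : ZMod (2*n))
      rw [hs0R, R_apply]
      linear_combination -hq
    · exact h
  set m := (((a0.val / 2 : ℕ)) : ZMod (2*n)) with hm
  have ha0m : a0 = 2 * m + 1 := by
    have h2d : 2 * (a0.val / 2) + 1 = a0.val := by omega
    have hq : ((2 * (a0.val / 2) + 1 : ℕ) : ZMod (2*n)) = a0 := by rw [h2d]; exact ha0cast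
    push_cast at hq
    rw [hm]
    linear_combination hq.symm
  -- conjugate by A m
  set u := -m + g1 a with hu_def
  set v := -m + g1 b with hv_def
  have huv : u ≠ v := by
    intro h
    apply hab
    apply g1.injective
    have : g1 a = g1 b := by
      have := h
      rw [hu_def, hv_def] at this
      exact add_left_cancel this
    exact this
  set s2 := (A m)⁻¹ * s1 * A m with hs2
  set t2 := (A m)⁻¹ * t1 * A m with ht2
  have ht2sw : t2 = Equiv.swap u v := by
    rw [ht2, ht1, hτ]
    have : g1 * Equiv.swap a b * g1⁻¹ = Equiv.swap (g1 a) (g1 b) :=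
      (swap_apply_apply g1 a b).symm
    rw [this, conj_swap]
    simp [hu_def, hv_def]
  have hs2R0 : R 1 * A 1 * s2 * t2 = 1 := by
    have e1 : (A m)⁻¹ * s0 * A m = R 1 := by
      rw [hs0R, conj_R]
      congr 1
      rw [ha0m]; ring
    have e2 : (A m)⁻¹ * (A 1) * A m = A 1 := conj_A 1 m
    calc R 1 * A 1 * s2 * t2
        = ((A m)⁻¹ * s0 * A m) * ((A m)⁻¹ * (A 1) * A m) * s2 * t2 := by rw [e1, e2]
    _ = (A m)⁻¹ * (s0 * A 1 * s1 * t1) * A m := by rw [hs2, ht2]; group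
    _ = 1 := by rw [hprod1]; group
  have hs2sq : s2 * s2 = 1 := by
    rw [hs2]
    have : (A m)⁻¹ * s1 * A m * ((A m)⁻¹ * s1 * A m) = (A m)⁻¹ * (s1 * s1) * A m := by group
    rw [this, hs1sq]; group
  have hdisj2 : s2.Disjoint t2 := by
    intro x
    rcases hdisj1 (A m x) with h | h
    · left; rw [hs2]; simp only [Perm.mul_apply, h]; simp
    · right; rw [ht2]; simp only [Perm.mul_apply, h]; simp
  have hμ : R 1 * A 1 = R (0 : ZMod (2*n)) := by rw [R_mul_A]; norm_num
  have hs2t2 : s2 * t2 = R 0 := by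
    have h' : R 0 * (s2 * t2) = 1 := by
      rw [← hμ]
      calc R 1 * A 1 * (s2 * t2) = R 1 * A 1 * s2 * t2 := by group
      _ = 1 := hs2R0
    calc s2 * t2 = (R 0 * R 0) * (s2 * t2) := by rw [R_sq]; group
    _ = R 0 * (R 0 * (s2 * t2)) := by group
    _ = R 0 := by rw [h']; group
  have hvnegu : v = -u := by
    have h1 : (s2 * t2) u = -u := by rw [hs2t2]; simp
    have h2' : t2 u = v := by rw [ht2sw]; simp
    have h3 : s2 v = v := by
      rcases hdisj2 v with h | h
      · exact h
      · exfalso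
        rw [ht2sw, Equiv.swap_apply_right] at h
        exact huv h
    rw [Perm.mul_apply, h2', h3] at h1
    exact h1
  have hune : u ≠ -u := by rw [← hvnegu]; exact huv
  obtain ⟨k, hk1, hk2, j, hj2, hjsw⟩ := extract hn u hune
  refine ⟨k, hk1, hk2, g1⁻¹ * A m * A j, ?_, ?_, ?_, ?_⟩
  · have : (g1⁻¹ * A m * A j)⁻¹ * σ0 * (g1⁻¹ * A m * A j)
        = (A j)⁻¹ * ((A m)⁻¹ * s0 * A m) * A j := by rw [hs0]; group
    rw [this, hs0R, conj_R, conj_R]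
    congr 1
    rw [ha0m]
    rw [show (2*m+1) - 2*m - 2*j = 1 - 2*j by ring, hj2]
    ring
  · have : (g1⁻¹ * A m * A j)⁻¹ * σi * (g1⁻¹ * A m * A j)
        = (A j)⁻¹ * ((A m)⁻¹ * (g1 * σi * g1⁻¹) * A m) * A j := by group
    rw [this, hg1, conj_A, conj_A]
  · have heq : (g1⁻¹ * A m * A j)⁻¹ * σ1 * (g1⁻¹ * A m * A j)
        = (A j)⁻¹ * s2 * A j := by rw [hs2, hs1]; group
    have hs2' : s2 = R 0 * t2 := by
      calc s2 = s2 * (t2 * t2) := by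
            rw [ht2sw, Equiv.swap_mul_self]; group
      _ = (s2 * t2) * t2 := by group
      _ = R 0 * t2 := by rw [hs2t2]
    rw [heq, hs2']
    have : (A j)⁻¹ * (R 0 * t2) * A j
        = ((A j)⁻¹ * R 0 * A j) * ((A j)⁻¹ * t2 * A j) := by group
    rw [this, conj_R, ht2sw, conj_swap]
    rw [show (0 : ZMod (2*n)) - 2*j = 0 - 2*j by ring, hj2]
    have : (A j)⁻¹ u = -j + u := by simp
    rw [this]
    have : (A j)⁻¹ v = -j + -u := by rw [hvnegu]; simp
    rw [this, hjsw]
    norm_num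
  · have heq : (g1⁻¹ * A m * A j)⁻¹ * τ * (g1⁻¹ * A m * A j)
        = (A j)⁻¹ * t2 * A j := by rw [ht2, ht1]; group
    rw [heq, ht2sw, conj_swap]
    have e1 : (A j)⁻¹ u = -j + u := by simp
    have e2 : (A j)⁻¹ v = -j + -u := by rw [hvnegu]; simp
    rw [e1, e2, hjsw]

lemma R_injective (x y : ZMod N) [NeZero N] (h : R x = R y) : x = y := by
  have := Perm.ext_iff.1 h 0
  simpa using this

lemma swap_moved {α : Type*} [DecidableEq α] {x y x' y' : α} (hxy : x ≠ y)
    (h : Equiv.swap x y = Equiv.swap x' y') :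
    (x = x' ∧ y = y') ∨ (x = y' ∧ y = x') := by
  have hy : y = Equiv.swap x' y' x := by rw [← h, Equiv.swap_apply_left]
  rcases eq_or_ne x x' with rfl | hxx
  · left
    refine ⟨rfl, ?_⟩
    rw [hy, Equiv.swap_apply_left]
  rcases eq_or_ne x y' with rfl | hxy'
  · right
    refine ⟨rfl, ?_⟩
    rw [hy, Equiv.swap_apply_right]
  · exfalso
    rw [Equiv.swap_apply_of_ne_of_ne hxx hxy'] at hy
    exact hxy hy.symm

lemma two_mul_eq_zero (hn : 2 ≤ n) {c : ZMod (2*n)} (hc : 2 * c = 0) :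
    c.val = 0 ∨ c.val = n := by
  haveI : NeZero (2*n) := ⟨by omega⟩
  have hvlt : c.val < 2*n := ZMod.val_lt c
  have hcast : ((c.val : ℕ) : ZMod (2*n)) = c := by simp [ZMod.natCast_val, ZMod.cast_id]
  have h1 : ((2 * c.val : ℕ) : ZMod (2*n)) = 0 := by push_cast [hcast]; exact hc
  have h2 : 2*n ∣ 2 * c.val := (ZMod.natCast_eq_zero_iff _ _).1 h1
  obtain ⟨t, ht⟩ := h2
  rcases Nat.lt_or_ge t 2 with h | h
  · interval_cases t <;> omega
  · nlinarith

lemma rigid (hn : 2 ≤ n) {k k' : ℕ} (hk1 : 1 ≤ k) (hk2 : k ≤ n/2)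
    (hk1' : 1 ≤ k') (hk2' : k' ≤ n/2) (g : Perm (ZMod (2*n)))
    (hA : g⁻¹ * A 1 * g = A 1) (hR : g⁻¹ * R 1 * g = R 1)
    (hτ : g⁻¹ * Equiv.swap ((k : ZMod (2*n))) (-((k:ℕ) : ZMod (2*n))) * g
        = Equiv.swap ((k' : ZMod (2*n))) (-((k':ℕ) : ZMod (2*n)))) : k = k' := by
  haveI : NeZero (2*n) := ⟨by omega⟩
  rw [mul_assoc, inv_mul_eq_iff_eq_mul] at hA
  have hg : g = A (g 0) := centralizer_A_one hA.symm
  set c0 := g 0 with hc0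
  -- from hR : 2 * c0 = 0
  rw [hg, conj_R] at hR
  have h2c : 2 * c0 = 0 := by
    have := R_injective _ _ hR
    linear_combination -this
  -- conjugate the swap
  rw [hg, conj_swap, A_inv, A_apply, A_apply] at hτ
  have hvk : ((k:ℕ) : ZMod (2*n)).val = k := ZMod.val_cast_of_lt (by omega)
  have hvk' : ((k':ℕ) : ZMod (2*n)).val = k' := ZMod.val_cast_of_lt (by omega)
  have hkne : ((k:ℕ) : ZMod (2*n)) ≠ 0 := by
    intro h; rw [h] at hvk; simp [ZMod.val_zero] at hvk; omega
  have hkne' : ((k':ℕ) : ZMod (2*n)) ≠ 0 := by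
    intro h; rw [h] at hvk'; simp [ZMod.val_zero] at hvk'; omega
  have hvnk : (-((k:ℕ) : ZMod (2*n))).val = 2*n - k := by
    rw [ZMod.neg_val, if_neg hkne, hvk]
  have hvnk' : (-((k':ℕ) : ZMod (2*n))).val = 2*n - k' := by
    rw [ZMod.neg_val, if_neg hkne', hvk']
  rcases two_mul_eq_zero hn h2c with h0 | h0
  · -- c0 = 0
    have hc00 : c0 = 0 := (ZMod.val_eq_zero c0).1 h0
    rw [hc00] at hτ
    simp only [neg_zero, zero_add] at hτ
    have hne : ((k:ℕ) : ZMod (2*n)) ≠ -((k:ℕ) : ZMod (2*n)) := by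
      intro h
      have := congrArg ZMod.val h
      rw [hvk, hvnk] at this; omega
    rcases swap_moved hne hτ with ⟨h1, _⟩ | ⟨h1, h2⟩
    · have := congrArg ZMod.val h1
      rw [hvk, hvk'] at this; exact this
    · have := congrArg ZMod.val h1
      rw [hvk, hvnk'] at this; omega
  · -- c0 = n
    have hc0n : c0 = ((n:ℕ) : ZMod (2*n)) := by
      have : ((c0.val : ℕ) : ZMod (2*n)) = c0 := by simp [ZMod.natCast_val, ZMod.cast_id]
      rw [← this, h0]
    have hnegn : -((n:ℕ) : ZMod (2*n)) = ((n:ℕ) : ZMod (2*n)) := neg_n hn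
    have e1 : -c0 + ((k:ℕ) : ZMod (2*n)) = (((n + k : ℕ)) : ZMod (2*n)) := by
      rw [hc0n, hnegn]; push_cast; ring
    have e2 : -c0 + -((k:ℕ) : ZMod (2*n)) = (((n - k : ℕ)) : ZMod (2*n)) := by
      rw [hc0n, Nat.cast_sub (by omega : k ≤ n)]
      linear_combination hnegn
    rw [e1, e2] at hτ
    have hvX : (((n + k : ℕ)) : ZMod (2*n)).val = n + k := ZMod.val_cast_of_lt (by omega)
    have hvY : (((n - k : ℕ)) : ZMod (2*n)).val = n - k := ZMod.val_cast_of_lt (by omega)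
    have hne : (((n + k : ℕ)) : ZMod (2*n)) ≠ (((n - k : ℕ)) : ZMod (2*n)) := by
      intro h
      have := congrArg ZMod.val h
      rw [hvX, hvY] at this; omega
    rcases swap_moved hne hτ with ⟨h1, _⟩ | ⟨h1, h2⟩
    · have := congrArg ZMod.val h1
      rw [hvX, hvk'] at this; omega
    · have ha := congrArg ZMod.val h1
      have hb := congrArg ZMod.val h2
      rw [hvX, hvnk'] at ha
      rw [hvY, hvk'] at hb
      omega

end Main


variable {N : ℕ} [NeZero N]

instance : DecidablePred (· ∈ Set.Icc (1:ℕ) N) :=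
  fun x => decidable_of_iff (1 ≤ x ∧ x ≤ N) Set.mem_Icc.symm

/-- The natural equivalence between `ZMod N` and `{1,…,N} ⊆ ℕ`. -/
def e (N : ℕ) [NeZero N] : ZMod N ≃ {x : ℕ // x ∈ Set.Icc 1 N} where
  toFun a := ⟨a.val + 1, by
    have := ZMod.val_lt a; exact Set.mem_Icc.2 ⟨by omega, by omega⟩⟩
  invFun x := ((x.1 - 1 : ℕ) : ZMod N)
  left_inv a := by simp
  right_inv x := by
    obtain ⟨x, hx⟩ := x
    have hx' := Set.mem_Icc.1 hx
    ext
    simp only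
    rw [ZMod.val_cast_of_lt (by omega)]
    omega

/-- Extension of permutations of `ZMod N` to permutations of `ℕ` supported on `{1,…,N}`. -/
def E (N : ℕ) [NeZero N] : Perm (ZMod N) →* Perm ℕ := extendDomainHom (e N)

lemma E_apply (g : Perm (ZMod N)) (a : ZMod N) : E N g ((e N a : ℕ)) = e N (g a) := by
  have := Perm.extendDomain_apply_image g (e N) a
  simpa [E, extendDomainHom] using congrArg Subtype.val this

lemma E_apply_not_mem (g : Perm (ZMod N)) {x : ℕ} (hx : x ∉ Set.Icc 1 N) : E N g x = x :=
  Perm.extendDomain_apply_not_subtype g (e N) hx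

lemma E_injective : Function.Injective (E N) := extendDomainHom_injective (e N)

lemma supp_E (g : Perm (ZMod N)) :
    {x | E N g x ≠ x} = (fun a => ((e N a : ℕ))) '' {a | g a ≠ a} := by
  ext x
  constructor
  · intro hx
    have hmem : x ∈ Set.Icc 1 N := by
      by_contra h
      exact hx (E_apply_not_mem g h)
    refine ⟨(e N).symm ⟨x, hmem⟩, ?_, by simp⟩
    intro h
    apply hx
    have := E_apply g ((e N).symm ⟨x, hmem⟩)
    rw [h] at this
    simpa using this
  · rintro ⟨a, ha, rfl⟩
    simp only [Set.mem_setOf_eq]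
    rw [E_apply]
    intro h
    exact ha ((e N).injective (Subtype.ext (by exact_mod_cast h)))

lemma supp_E_subset (g : Perm (ZMod N)) : {x | E N g x ≠ x} ⊆ Set.Icc 1 N := by
  rw [supp_E]; rintro x ⟨a, _, rfl⟩; exact (e N a).2

lemma range_image : (fun a => ((e N a : ℕ))) '' Set.univ = Set.Icc 1 N := by
  ext x
  constructor
  · rintro ⟨a, _, rfl⟩; exact (e N a).2
  · intro hx; exact ⟨(e N).symm ⟨x, hx⟩, trivial, by simp⟩

lemma E_surj_on_supported (γ : Perm ℕ) (h : {x | γ x ≠ x} ⊆ Set.Icc 1 N) :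
    ∃ g, γ = E N g := by
  have hfix : ∀ x, x ∉ Set.Icc 1 N → γ x = x := fun x hx => by
    by_contra hc; exact hx (h hc)
  have hinv : ∀ x, x ∈ Set.Icc 1 N ↔ γ x ∈ Set.Icc 1 N := by
    intro x
    constructor
    · intro hx
      by_contra hgx
      have h1 : γ (γ x) = γ x := hfix _ hgx
      have := γ.injective h1
      rw [this] at hgx; exact hgx hx
    · intro hgx
      by_contra hx
      rw [hfix x hx] at hgx; exact hx hgx
  refine ⟨(e N).permCongr.symm (γ.subtypePerm (fun x => (hinv x).symm)), ?_⟩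
  ext x
  by_cases hx : x ∈ Set.Icc 1 N
  · have : x = ((e N ((e N).symm ⟨x, hx⟩) : ℕ)) := by simp
    rw [this, E_apply]
    simp [Equiv.permCongr_apply, Perm.subtypePerm_apply]
  · rw [hfix x hx, E_apply_not_mem _ hx]

lemma E_swap (a b : ZMod N) : E N (Equiv.swap a b) = Equiv.swap ((e N a : ℕ)) ((e N b : ℕ)) := by
  ext x
  by_cases hx : x ∈ Set.Icc 1 N
  · obtain ⟨c, -, rfl⟩ : ∃ c, c ∈ Set.univ ∧ ((e N c : ℕ)) = x := by
      rw [← Set.mem_image]; rw [range_image]; exact hx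
    rw [E_apply]
    rcases eq_or_ne c a with rfl | hca
    · simp
    rcases eq_or_ne c b with rfl | hcb
    · simp
    rw [Equiv.swap_apply_of_ne_of_ne hca hcb,
      Equiv.swap_apply_of_ne_of_ne]
    · exact fun h => hca ((e N).injective (Subtype.ext h))
    · exact fun h => hcb ((e N).injective (Subtype.ext h))
  · rw [E_apply_not_mem _ hx, Equiv.swap_apply_of_ne_of_ne]
    · exact fun h => hx (h ▸ (e N a).2)
    · exact fun h => hx (h ▸ (e N b).2)

section Reps

variable {n : ℕ}

lemma two_mul_ne_one (hn : 2 ≤ n) (x : ZMod (2*n)) : 2 * x ≠ 1 := by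
  haveI : NeZero (2*n) := ⟨by omega⟩
  haveI : Fact (1 < 2*n) := ⟨by omega⟩
  intro h
  have hxx : x + x = 1 := by linear_combination h
  have hv := congrArg ZMod.val hxx
  rw [ZMod.val_one, ZMod.val_add] at hv
  have hlt : x.val < 2*n := ZMod.val_lt x
  have hdm := Nat.div_add_mod (x.val + x.val) (2*n)
  set q := (x.val + x.val) / (2*n) with hq
  have hqlt : q < 2 := by
    rw [hq]
    apply Nat.div_lt_of_lt_mul
    omega
  interval_cases q <;> omega

lemma R_one_fpf (hn : 2 ≤ n) (x : ZMod (2*n)) : R 1 x ≠ x := by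
  intro h
  rw [R_apply] at h
  exact two_mul_ne_one hn x (by linear_combination -h)

lemma A_one_fpf (hn : 2 ≤ n) (x : ZMod (2*n)) : A 1 x ≠ x := by
  haveI : NeZero (2*n) := ⟨by omega⟩
  haveI : Fact (1 < 2*n) := ⟨by omega⟩
  intro h
  rw [A_apply] at h
  have : (1 : ZMod (2*n)) = 0 := by linear_combination h
  exact one_ne_zero this

lemma two_mul_zero_iff (hn : 2 ≤ n) (x : ZMod (2*n)) :
    2 * x = 0 ↔ x = 0 ∨ x = ((n:ℕ) : ZMod (2*n)) := by
  haveI : NeZero (2*n) := ⟨by omega⟩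
  constructor
  · intro h
    rcases two_mul_eq_zero hn h with h0 | h0
    · left; exact (ZMod.val_eq_zero x).1 h0
    · right
      have : ((x.val : ℕ) : ZMod (2*n)) = x := by simp [ZMod.natCast_val, ZMod.cast_id]
      rw [← this, h0]
  · rintro (rfl | rfl)
    · ring
    · have h2n : (((2*n : ℕ)) : ZMod (2*n)) = 0 := ZMod.natCast_self _
      rw [show (2 : ZMod (2*n)) * ((n:ℕ) : ZMod (2*n)) = (((2*n : ℕ)) : ZMod (2*n)) by
        push_cast; ring, h2n]

variable (hn : 2 ≤ n) {k : ℕ} (hk1 : 1 ≤ k) (hk2 : k ≤ n/2)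

section Vals
include hn hk1 hk2

lemma val_k : ((k:ℕ) : ZMod (2*n)).val = k := by
  haveI : NeZero (2*n) := ⟨by omega⟩
  exact ZMod.val_cast_of_lt (by omega)

lemma val_negk : (-((k:ℕ) : ZMod (2*n))).val = 2*n - k := by
  haveI : NeZero (2*n) := ⟨by omega⟩
  have hkne : ((k:ℕ) : ZMod (2*n)) ≠ 0 := by
    intro h
    have := congrArg ZMod.val h
    rw [val_k hn hk1 hk2] at this
    simp at this
    omega
  rw [ZMod.neg_val, if_neg hkne, val_k hn hk1 hk2]

lemma val_n : (((n:ℕ)) : ZMod (2*n)).val = n := by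
  haveI : NeZero (2*n) := ⟨by omega⟩
  exact ZMod.val_cast_of_lt (by omega)

lemma k_ne_negk : ((k:ℕ) : ZMod (2*n)) ≠ -((k:ℕ) : ZMod (2*n)) := by
  intro h
  have := congrArg ZMod.val h
  rw [val_k hn hk1 hk2, val_negk hn hk1 hk2] at this
  omega

lemma fix_sigma1 :
    {x : ZMod (2*n) | ((R 0 * Equiv.swap ((k:ℕ) : ZMod (2*n)) (-((k:ℕ) : ZMod (2*n))) : Equiv.Perm (ZMod (2*n)))) x ≠ x}
      = Set.univ \ {0, ((n:ℕ) : ZMod (2*n)), ((k:ℕ) : ZMod (2*n)), -((k:ℕ) : ZMod (2*n))} := by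
  haveI : NeZero (2*n) := ⟨by omega⟩
  ext x
  simp only [Set.mem_setOf_eq, Set.mem_diff, Set.mem_univ, true_and, Set.mem_insert_iff,
    Set.mem_singleton_iff, Perm.mul_apply]
  constructor
  · intro hx
    push_neg
    refine ⟨?_, ?_, ?_, ?_⟩
    · rintro rfl
      apply hx
      rw [Equiv.swap_apply_of_ne_of_ne, R_apply]
      · ring
      · intro h
        have := congrArg ZMod.val h
        rw [ZMod.val_zero, val_k hn hk1 hk2] at this; omega
      · intro h
        have := congrArg ZMod.val h
        rw [ZMod.val_zero, val_negk hn hk1 hk2] at this; omega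
    · rintro rfl
      apply hx
      rw [Equiv.swap_apply_of_ne_of_ne, R_apply]
      · have := (two_mul_zero_iff hn (((n:ℕ)) : ZMod (2*n))).2 (Or.inr rfl)
        linear_combination -this
      · intro h
        have := congrArg ZMod.val h
        rw [val_n hn hk1 hk2, val_k hn hk1 hk2] at this; omega
      · intro h
        have := congrArg ZMod.val h
        rw [val_n hn hk1 hk2, val_negk hn hk1 hk2] at this; omega
    · rintro rfl
      apply hx
      rw [Equiv.swap_apply_left, R_apply]
      ring
    · rintro rfl
      apply hx
      rw [Equiv.swap_apply_right, R_apply]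
      ring
  · intro hor hx
    push_neg at hor
    obtain ⟨h0, hnn, hk, hnk⟩ := hor
    rw [Equiv.swap_apply_of_ne_of_ne hk hnk, R_apply] at hx
    have h2x : 2 * x = 0 := by linear_combination -hx
    rcases (two_mul_zero_iff hn x).1 h2x with rfl | rfl
    · exact h0 rfl
    · exact hnn rfl

lemma ncard_fix_sigma1 :
    {x : ZMod (2*n) | ((R 0 * Equiv.swap ((k:ℕ) : ZMod (2*n)) (-((k:ℕ) : ZMod (2*n))) : Equiv.Perm (ZMod (2*n)))) x ≠ x}.ncard
      = 2*(n-2) := by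
  haveI : NeZero (2*n) := ⟨by omega⟩
  rw [fix_sigma1 hn hk1 hk2]
  have hvn := val_n hn hk1 hk2
  have hvk := val_k hn hk1 hk2
  have hvnk := val_negk hn hk1 hk2
  have d1 : (0 : ZMod (2*n)) ≠ ((n:ℕ) : ZMod (2*n)) := by
    intro h; have := congrArg ZMod.val h; rw [ZMod.val_zero, hvn] at this; omega
  have d2 : (0 : ZMod (2*n)) ≠ ((k:ℕ) : ZMod (2*n)) := by
    intro h; have := congrArg ZMod.val h; rw [ZMod.val_zero, hvk] at this; omega
  have d3 : (0 : ZMod (2*n)) ≠ -((k:ℕ) : ZMod (2*n)) := by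
    intro h; have := congrArg ZMod.val h; rw [ZMod.val_zero, hvnk] at this; omega
  have d4 : ((n:ℕ) : ZMod (2*n)) ≠ ((k:ℕ) : ZMod (2*n)) := by
    intro h; have := congrArg ZMod.val h; rw [hvn, hvk] at this; omega
  have d5 : ((n:ℕ) : ZMod (2*n)) ≠ -((k:ℕ) : ZMod (2*n)) := by
    intro h; have := congrArg ZMod.val h; rw [hvn, hvnk] at this; omega
  have d6 : ((k:ℕ) : ZMod (2*n)) ≠ -((k:ℕ) : ZMod (2*n)) := k_ne_negk hn hk1 hk2
  have hs4 : ({0, ((n:ℕ) : ZMod (2*n)), ((k:ℕ) : ZMod (2*n)),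
      -((k:ℕ) : ZMod (2*n))} : Set (ZMod (2*n))).ncard = 4 := by
    rw [Set.ncard_insert_of_notMem (by simp [d1, d2, d3]),
      Set.ncard_insert_of_notMem (by simp [d4, d5]),
      Set.ncard_pair d6]
  rw [Set.ncard_diff (Set.subset_univ _), Set.ncard_univ, Nat.card_zmod, hs4]
  omega

end Vals
end Reps

section Assembly

open Equiv Equiv.Perm

/-- conjugacy class of a 4-tuple under permutations supported on `{1,…,2n}` -/
def Cls (n : ℕ) (t : Perm ℕ × Perm ℕ × Perm ℕ × Perm ℕ) :
    Set (Perm ℕ × Perm ℕ × Perm ℕ × Perm ℕ) :=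
  {p | ∃ γ : Perm ℕ, {x | γ x ≠ x} ⊆ Set.Icc 1 (2*n) ∧
      p = (γ⁻¹ * t.1 * γ, γ⁻¹ * t.2.1 * γ, γ⁻¹ * t.2.2.1 * γ, γ⁻¹ * t.2.2.2 * γ)}

lemma supp_inv (γ : Perm ℕ) : {x | γ⁻¹ x ≠ x} = {x | γ x ≠ x} := by
  ext x
  simp only [Set.mem_setOf_eq, ne_eq, Perm.inv_eq_iff_eq]
  exact not_congr ⟨Eq.symm, Eq.symm⟩

lemma supp_mul (γ δ : Perm ℕ) :
    {x | (γ * δ) x ≠ x} ⊆ {x | γ x ≠ x} ∪ {x | δ x ≠ x} := by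
  intro x hx
  by_contra h
  simp only [Set.mem_union, Set.mem_setOf_eq] at h
  push_neg at h
  exact hx (by rw [Perm.mul_apply, h.2, h.1])

lemma Cls_conj {n : ℕ} (t0 t1 t2 t3 : Perm ℕ) {γ0 : Perm ℕ}
    (h0 : {x | γ0 x ≠ x} ⊆ Set.Icc 1 (2*n)) :
    Cls n (t0, t1, t2, t3)
      = Cls n (γ0⁻¹ * t0 * γ0, γ0⁻¹ * t1 * γ0, γ0⁻¹ * t2 * γ0, γ0⁻¹ * t3 * γ0) := by
  ext p
  constructor
  · rintro ⟨δ, hδ, rfl⟩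
    refine ⟨γ0⁻¹ * δ, ?_, ?_⟩
    · intro x hx
      rcases supp_mul γ0⁻¹ δ hx with h | h
      · exact h0 (by rwa [supp_inv] at h)
      · exact hδ h
    · simp only [Prod.mk.injEq, Cls]
      refine ⟨by group, by group, by group, by group⟩
  · rintro ⟨δ, hδ, rfl⟩
    refine ⟨γ0 * δ, ?_, ?_⟩
    · intro x hx
      rcases supp_mul γ0 δ hx with h | h
      · exact h0 h
      · exact hδ h
    · simp only [Prod.mk.injEq, Cls]
      refine ⟨by group, by group, by group, by group⟩

variable {n : ℕ}

/-- the representative tuple -/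
def rep4 (n : ℕ) [NeZero (2*n)] (k : ℕ) :
    Perm ℕ × Perm ℕ × Perm ℕ × Perm ℕ :=
  (E (2*n) (R 1), E (2*n) (A 1),
   E (2*n) (R 0 * Equiv.swap ((k:ℕ) : ZMod (2*n)) (-((k:ℕ) : ZMod (2*n)))),
   E (2*n) (Equiv.swap ((k:ℕ) : ZMod (2*n)) (-((k:ℕ) : ZMod (2*n)))))

lemma rep_admissible (hn : 2 ≤ n) [NeZero (2*n)] {k : ℕ} (hk1 : 1 ≤ k) (hk2 : k ≤ n/2) :
    IsAdmissible n (rep4 n k).1 (rep4 n k).2.1 (rep4 n k).2.2.1 (rep4 n k).2.2.2 ∧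
      Perm.Disjoint (rep4 n k).2.2.1 (rep4 n k).2.2.2 := by
  haveI : Fact (1 < 2*n) := ⟨by omega⟩
  set w : Perm (ZMod (2*n)) :=
    Equiv.swap ((k:ℕ) : ZMod (2*n)) (-((k:ℕ) : ZMod (2*n))) with hw
  have d6 : ((k:ℕ) : ZMod (2*n)) ≠ -((k:ℕ) : ZMod (2*n)) := k_ne_negk hn hk1 hk2
  have hμ : R 1 * A 1 = R (0 : ZMod (2*n)) := by rw [R_mul_A]; norm_num
  have hR0w : R 0 * w * R 0 = w := by
    have h1 := swap_apply_apply (R (0 : ZMod (2*n))) ((k:ℕ) : ZMod (2*n))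
      (-((k:ℕ) : ZMod (2*n)))
    rw [R_inv] at h1
    have e1 : R (0 : ZMod (2*n)) ((k:ℕ) : ZMod (2*n)) = -((k:ℕ) : ZMod (2*n)) := by
      rw [R_apply]; ring
    have e2 : R (0 : ZMod (2*n)) (-((k:ℕ) : ZMod (2*n))) = ((k:ℕ) : ZMod (2*n)) := by
      rw [R_apply]; ring
    rw [e1, e2, Equiv.swap_comm, ← hw] at h1
    exact h1.symm
  have prodM : R 1 * A 1 * (R 0 * w) * w = 1 := by
    calc R 1 * A 1 * (R 0 * w) * w = (R 1 * A 1) * R 0 * (w * w) := by group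
    _ = R 0 * R 0 * (w * w) := by rw [hμ]
    _ = 1 := by rw [hw, Equiv.swap_mul_self, R_sq, mul_one]
  have s1sqM : (R 0 * w) * (R 0 * w) = 1 := by
    calc (R 0 * w) * (R 0 * w) = (R 0 * w * R 0) * w := by group
    _ = w * w := by rw [hR0w]
    _ = 1 := by rw [hw, Equiv.swap_mul_self]
  have hinj : Function.Injective fun a : ZMod (2*n) => ((e (2*n) a : ℕ)) :=
    fun x y hxy => (e (2*n)).injective (Subtype.ext hxy)
  have hfix1 : ((R 0 * w : Perm (ZMod (2*n)))) ((k:ℕ) : ZMod (2*n)) = ((k:ℕ) : ZMod (2*n)) := by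
    rw [Perm.mul_apply, hw, Equiv.swap_apply_left, R_apply]; ring
  have hfix2 : ((R 0 * w : Perm (ZMod (2*n)))) (-((k:ℕ) : ZMod (2*n))) = -((k:ℕ) : ZMod (2*n)) := by
    rw [Perm.mul_apply, hw, Equiv.swap_apply_right, R_apply]; ring
  constructor
  · refine ⟨?_, ?_, ?_, ?_, ?_, ?_, ?_, ?_, ?_⟩
    · show E (2*n) (R 1) * E (2*n) (A 1) * E (2*n) (R 0 * w) * E (2*n) w = 1
      rw [← map_mul, ← map_mul, ← map_mul, prodM, map_one]
    · show E (2*n) (R 1) * E (2*n) (R 1) = 1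
      rw [← map_mul, R_sq, map_one]
    · show {x | E (2*n) (R 1) x ≠ x} = Set.Icc 1 (2*n)
      rw [supp_E]
      rw [show {a : ZMod (2*n) | R 1 a ≠ a} = Set.univ by
        ext a; simpa using R_one_fpf hn a]
      exact range_image
    · show (E (2*n) (A 1)).IsCycle
      exact (isCycle_A_one one_ne_zero).extendDomain (e (2*n))
    · show {x | E (2*n) (A 1) x ≠ x} = Set.Icc 1 (2*n)
      rw [supp_E]
      rw [show {a : ZMod (2*n) | A 1 a ≠ a} = Set.univ by
        ext a; simpa using A_one_fpf hn a]
      exact range_image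
    · show E (2*n) (R 0 * w) * E (2*n) (R 0 * w) = 1
      rw [← map_mul, s1sqM, map_one]
    · exact supp_E_subset _
    · show {x | E (2*n) (R 0 * w) x ≠ x}.ncard = 2*(n-2)
      rw [supp_E, Set.ncard_image_of_injective _ hinj]
      exact ncard_fix_sigma1 hn hk1 hk2
    · refine ⟨((e (2*n) ((k:ℕ) : ZMod (2*n)) : ℕ)),
        ((e (2*n) (-((k:ℕ) : ZMod (2*n))) : ℕ)), ?_, (e (2*n) _).2, (e (2*n) _).2, ?_⟩
      · intro h
        exact d6 ((e (2*n)).injective (Subtype.ext h))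
      · show E (2*n) w = _
        rw [hw, E_swap]
  · intro x
    by_cases hx : x ∈ Set.Icc 1 (2*n)
    · obtain ⟨c, rfl⟩ : ∃ c, ((e (2*n) c : ℕ)) = x := ⟨(e (2*n)).symm ⟨x, hx⟩, by simp⟩
      rcases eq_or_ne c ((k:ℕ) : ZMod (2*n)) with rfl | hck
      · left
        show E (2*n) (R 0 * w) _ = _
        rw [E_apply, hfix1]
      rcases eq_or_ne c (-((k:ℕ) : ZMod (2*n))) with rfl | hcnk
      · left
        show E (2*n) (R 0 * w) _ = _
        rw [E_apply, hfix2]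
      · right
        show E (2*n) w _ = _
        rw [E_apply, hw, Equiv.swap_apply_of_ne_of_ne hck hcnk]
    · left
      exact E_apply_not_mem _ hx

end Assembly

end Stmt14

/-- The number of simultaneous-conjugacy classes (under elements of `S_{2n}`, i.e. permutations
supported on `{1,…,2n}`) of admissible 4-tuples with `σ1` and `τ` disjoint equals `⌊n/2⌋`. -/
theorem stmt14 (n : ℕ) (hn : 2 ≤ n) :
    {C : Set (Equiv.Perm ℕ × Equiv.Perm ℕ × Equiv.Perm ℕ × Equiv.Perm ℕ) |
      ∃ σ0 σi σ1 τ : Equiv.Perm ℕ, IsAdmissible n σ0 σi σ1 τ ∧ σ1.Disjoint τ ∧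
        C = {p | ∃ γ : Equiv.Perm ℕ, {x | γ x ≠ x} ⊆ Set.Icc 1 (2*n) ∧
          p = (γ⁻¹ * σ0 * γ, γ⁻¹ * σi * γ, γ⁻¹ * σ1 * γ, γ⁻¹ * τ * γ)}}.ncard = n / 2 := by
  classical
  haveI : NeZero (2*n) := ⟨by omega⟩
  haveI : Fact (1 < 2*n) := ⟨by omega⟩
  open Stmt14 in
  have key : {C : Set (Equiv.Perm ℕ × Equiv.Perm ℕ × Equiv.Perm ℕ × Equiv.Perm ℕ) |
      ∃ σ0 σi σ1 τ : Equiv.Perm ℕ, IsAdmissible n σ0 σi σ1 τ ∧ σ1.Disjoint τ ∧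
        C = {p | ∃ γ : Equiv.Perm ℕ, {x | γ x ≠ x} ⊆ Set.Icc 1 (2*n) ∧
          p = (γ⁻¹ * σ0 * γ, γ⁻¹ * σi * γ, γ⁻¹ * σ1 * γ, γ⁻¹ * τ * γ)}}
      = (fun k => Cls n (rep4 n k)) '' Set.Icc 1 (n/2) := by
    ext C
    simp only [Set.mem_setOf_eq, Set.mem_image, Set.mem_Icc]
    constructor
    · rintro ⟨σ0, σi, σ1, τ, ⟨hprod, h0sq, h0s, hiC, his, h1sq, h1s, h1c,
        a, b, hab, ha, hb, hτ⟩, hdisj, rfl⟩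
      obtain ⟨s0, rfl⟩ := E_surj_on_supported (N := 2*n) σ0 (by rw [h0s])
      obtain ⟨si, rfl⟩ := E_surj_on_supported (N := 2*n) σi (by rw [his])
      obtain ⟨s1, rfl⟩ := E_surj_on_supported (N := 2*n) σ1 h1s
      set α := (e (2*n)).symm ⟨a, ha⟩ with hα
      set β := (e (2*n)).symm ⟨b, hb⟩ with hβ
      have hea : ((e (2*n) α : ℕ)) = a := by rw [hα]; simp
      have heb : ((e (2*n) β : ℕ)) = b := by rw [hβ]; simp
      have hτE : τ = E (2*n) (Equiv.swap α β) := by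
        rw [hτ, E_swap, hea, heb]
      have hαβ : α ≠ β := by
        intro h
        exact hab (by rw [← hea, ← heb, h])
      have h0fM : ∀ x, s0 x ≠ x := by
        intro x hx
        have hmem : ((e (2*n) x : ℕ)) ∈ {y | E (2*n) s0 y ≠ y} := by
          rw [h0s]; exact (e (2*n) x).2
        exact hmem (by rw [E_apply, hx])
      have hifM : ∀ x, si x ≠ x := by
        intro x hx
        have hmem : ((e (2*n) x : ℕ)) ∈ {y | E (2*n) si y ≠ y} := by
          rw [his]; exact (e (2*n) x).2
        exact hmem (by rw [E_apply, hx])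
      have h0sqM : s0 * s0 = 1 := E_injective (by rw [map_mul, h0sq, map_one])
      have h1sqM : s1 * s1 = 1 := E_injective (by rw [map_mul, h1sq, map_one])
      have hiCM : si.IsCycle := by
        obtain ⟨x0, hx0, hsc⟩ := hiC
        refine ⟨0, hifM 0, fun y hy => ?_⟩
        have m0 : E (2*n) si ((e (2*n) 0 : ℕ)) ≠ ((e (2*n) 0 : ℕ)) := by
          rw [E_apply]
          intro hcon
          exact hifM 0 ((e (2*n)).injective (Subtype.ext hcon))
        have my : E (2*n) si ((e (2*n) y : ℕ)) ≠ ((e (2*n) y : ℕ)) := by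
          rw [E_apply]
          intro hcon
          exact hy ((e (2*n)).injective (Subtype.ext hcon))
        obtain ⟨i, hi⟩ := (hsc m0).symm.trans (hsc my)
        refine ⟨i, ?_⟩
        rw [← map_zpow, E_apply] at hi
        exact (e (2*n)).injective (Subtype.ext hi)
      have hprodM : s0 * si * s1 * Equiv.swap α β = 1 := by
        apply E_injective
        simp only [map_mul, map_one]
        rw [← hτE]
        exact hprod
      have hdisjM : s1.Disjoint (Equiv.swap α β) := by
        intro x
        rcases hdisj ((e (2*n) x : ℕ)) with h | h
        · left
          rw [E_apply] at h
          exact (e (2*n)).injective (Subtype.ext h)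
        · right
          rw [hτE, E_apply] at h
          exact (e (2*n)).injective (Subtype.ext h)
      obtain ⟨k, hk1, hk2, g, hg0, hgi, hg1, hgτ⟩ :=
        main hn s0 si s1 (Equiv.swap α β) hprodM h0sqM h0fM hiCM hifM h1sqM hαβ rfl hdisjM
      refine ⟨k, ⟨hk1, hk2⟩, ?_⟩
      have hCls : {p | ∃ γ : Equiv.Perm ℕ, {x | γ x ≠ x} ⊆ Set.Icc 1 (2*n) ∧
          p = (γ⁻¹ * E (2*n) s0 * γ, γ⁻¹ * E (2*n) si * γ,
              γ⁻¹ * E (2*n) s1 * γ, γ⁻¹ * τ * γ)}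
          = Cls n (E (2*n) s0, E (2*n) si, E (2*n) s1, E (2*n) (Equiv.swap α β)) := by
        rw [← hτE]; rfl
      rw [hCls, Cls_conj (E (2*n) s0) (E (2*n) si) (E (2*n) s1)
        (E (2*n) (Equiv.swap α β)) (supp_E_subset g)]
      have c0 : (E (2*n) g)⁻¹ * E (2*n) s0 * E (2*n) g = E (2*n) (R 1) := by
        rw [← map_inv, ← map_mul, ← map_mul, hg0]
      have ci : (E (2*n) g)⁻¹ * E (2*n) si * E (2*n) g = E (2*n) (A 1) := by
        rw [← map_inv, ← map_mul, ← map_mul, hgi]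
      have c1 : (E (2*n) g)⁻¹ * E (2*n) s1 * E (2*n) g
          = E (2*n) (R 0 * Equiv.swap ((k:ℕ) : ZMod (2*n)) (-((k:ℕ) : ZMod (2*n)))) := by
        rw [← map_inv, ← map_mul, ← map_mul, hg1]
      have cτ : (E (2*n) g)⁻¹ * E (2*n) (Equiv.swap α β) * E (2*n) g
          = E (2*n) (Equiv.swap ((k:ℕ) : ZMod (2*n)) (-((k:ℕ) : ZMod (2*n)))) := by
        rw [← map_inv, ← map_mul, ← map_mul, hgτ]
      rw [c0, ci, c1, cτ]
      rfl
    · rintro ⟨k, ⟨hk1, hk2⟩, rfl⟩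
      obtain ⟨hadm, hdisj⟩ := rep_admissible hn hk1 hk2
      exact ⟨(rep4 n k).1, (rep4 n k).2.1, (rep4 n k).2.2.1, (rep4 n k).2.2.2,
        hadm, hdisj, rfl⟩
  rw [key]
  have hinjOn : Set.InjOn (fun k => Cls n (rep4 n k)) (Set.Icc 1 (n/2)) := by
    intro k hk k' hk' hFF
    simp only [Set.mem_Icc] at hk hk'
    have hmem : rep4 n k' ∈ Cls n (rep4 n k') := by
      refine ⟨1, by intro x hx; exact absurd rfl hx, by simp⟩
    simp only at hFF
    rw [← hFF] at hmem
    obtain ⟨γ, hγs, hγe⟩ := hmem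
    obtain ⟨g, rfl⟩ := E_surj_on_supported (N := 2*n) γ hγs
    obtain ⟨h1, h2, h3, h4⟩ :
        (rep4 n k').1 = (E (2*n) g)⁻¹ * (rep4 n k).1 * E (2*n) g ∧
        (rep4 n k').2.1 = (E (2*n) g)⁻¹ * (rep4 n k).2.1 * E (2*n) g ∧
        (rep4 n k').2.2.1 = (E (2*n) g)⁻¹ * (rep4 n k).2.2.1 * E (2*n) g ∧
        (rep4 n k').2.2.2 = (E (2*n) g)⁻¹ * (rep4 n k).2.2.2 * E (2*n) g := by
      rw [Prod.ext_iff, Prod.ext_iff, Prod.ext_iff] at hγe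
      exact ⟨hγe.1, hγe.2.1, hγe.2.2.1, hγe.2.2.2⟩
    have hA : g⁻¹ * A 1 * g = A 1 := by
      apply E_injective
      simp only [map_mul, map_inv]
      exact h2.symm
    have hR : g⁻¹ * R 1 * g = R 1 := by
      apply E_injective
      simp only [map_mul, map_inv]
      exact h1.symm
    have hT : g⁻¹ * Equiv.swap ((k:ℕ) : ZMod (2*n)) (-((k:ℕ) : ZMod (2*n))) * g
        = Equiv.swap ((k':ℕ) : ZMod (2*n)) (-((k':ℕ) : ZMod (2*n))) := by
      apply E_injective
      simp only [map_mul, map_inv]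
      exact h4.symm
    exact rigid hn hk.1 hk.2 hk'.1 hk'.2 g hA hR hT
  rw [Set.ncard_image_of_injOn hinjOn, ← Finset.coe_Icc, Set.ncard_coe_finset,
    Nat.card_Icc]
  omega
end

section
/- Let n ≥ 2 and work in S_{2n}. Let σ∞ be the 2n-cycle sending j ↦ j−1 for j ≥ 2 and 1 ↦ 2n, let σ0 = ∏_{i=1}^{n} (i, 2n+1−i), and for some h with 1 ≤ h ≤ n−1 let τ = (h, 2n−h) and σ1 = ∏_{1 ≤ i ≤ n−1, i ≠ h} (i, 2n−i). Let m ≥ 2 be a divisor of n with n/m ≥ 2. Then the subgroup of S_{2n} generated by σ0, σ∞, σ1, τ preserves some partition of {1,…,2n} into 2m blocks each of cardinality n/m if and only if m divides h. -/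
/-!
The rotation `σi : x ↦ x - 1 (mod 2n)` acts regularly on `{1, …, 2n}`, so an invariant
partition is the orbit of any one of its blocks `B`: the blocks are the translates `σiᵗ '' B`
for `t` below the minimal period of `B`, which is therefore the number `2m` of blocks, and `σiᵗ`
maps a point of `B` into `B` only when `2m ∣ t`. Hence every block lies in a residue class
mod `2m`. Let `B ∋ h`. As `B` has a point other than `h`, either `2n - h ∈ B` or
`τ = (h, 2n - h)` fixes a point of `B`, so `τ '' B = B` and again `2n - h ∈ B`.
Thus `h ≡ 2n - h (mod 2m)`, i.e. `m ∣ h`.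

Conversely, if `m ∣ h`, each generator acts on residues mod `2m` as an affine map
(`x ↦ 1 - x`, `x - 1`, `-x`, `x`), so the residue classes mod `2m` form an invariant partition.
-/

open Equiv Set Function Pointwise

theorem prod_map_swap_sub_apply {s : ℕ} {l : List ℕ} (hl : l.Nodup)
    (hs : ∀ j ∈ l, 2 * j < s) (x : ℕ) :
    (l.map fun j => swap j (s - j)).prod x =
      if ∃ j ∈ l, x = j ∨ x = s - j then s - x else x := by
  induction l with
  | nil => simp
  | cons a l ih =>
    rw [List.nodup_cons] at hl
    have ha := hs a (by simp)
    have hl' : ∀ j ∈ l, 2 * j < s := fun j hj => hs j (by simp [hj])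
    rw [List.map_cons, List.prod_cons, Perm.mul_apply, ih hl.2 hl']
    by_cases hx : ∃ j ∈ l, x = j ∨ x = s - j
    · obtain ⟨j, hj, hxj⟩ := hx
      have hja : j ≠ a := fun h => hl.1 (h ▸ hj)
      have := hl' j hj
      rw [if_pos ⟨j, hj, hxj⟩, swap_apply_of_ne_of_ne (by omega) (by omega),
        if_pos ⟨j, by simp [hj], hxj⟩]
    · have hxl : (∃ j ∈ a :: l, x = j ∨ x = s - j) ↔ x = a ∨ x = s - a := by
        simp only [List.mem_cons, exists_eq_or_imp, or_iff_left hx]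
      rw [if_neg hx, if_congr hxl rfl rfl, swap_apply_def]
      split_ifs <;> omega

theorem swap_apply_mem {α : Type*} [DecidableEq α] {s : Set α} {a b x : α} (ha : a ∈ s)
    (hb : b ∈ s) (hx : x ∈ s) : swap a b x ∈ s := by
  rw [swap_apply_def]
  split_ifs <;> assumption

theorem swap_apply_modEq {a b q : ℕ} (hab : (a : ℤ) ≡ b [ZMOD q]) (x : ℕ) :
    (swap a b x : ℤ) ≡ x [ZMOD q] := by
  rw [swap_apply_def]
  split_ifs with ha hb
  · exact ha ▸ hab.symm
  · exact hb ▸ hab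
  · rfl

theorem eq_of_modEq_of_mem_Icc {k x y : ℕ} (hx : x ∈ Icc 1 k) (hy : y ∈ Icc 1 k)
    (h : (x : ℤ) ≡ y [ZMOD k]) : x = y := by
  simp only [mem_Icc] at hx hy
  have := Int.eq_zero_of_abs_lt_dvd h.dvd (by rw [abs_lt]; omega)
  omega

theorem mem_of_swap_image_mem {α : Type*} [DecidableEq α] {P : Set (Set α)}
    (hD : P.PairwiseDisjoint id) {B : Set α} (hB : B ∈ P) {a b : α}
    (hswap : swap a b '' B ∈ P) (ha : a ∈ B) (hz : ∃ z ∈ B, z ≠ a) : b ∈ B := by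
  obtain ⟨z, hzB, hza⟩ := hz
  by_cases hzb : z = b
  · exact hzb ▸ hzB
  have hfix : swap a b '' B = B :=
    hD.elim_set hswap hB z ⟨z, hzB, swap_apply_of_ne_of_ne hza hzb⟩ hzB
  exact hfix ▸ ⟨a, ha, swap_apply_left a b⟩

theorem Equiv.Perm.smul_set_eq_image {α : Type*} (g : Perm α) (B : Set α) :
    g • B = g '' B := by
  rw [← image_smul]
  rfl

theorem mem_stabilizer_of_mapsTo {α : Type*} {P : Set (Set α)} (hP : P.Finite) {g : Perm α}
    (hg : MapsTo (image g) P P) : g ∈ MulAction.stabilizer (Perm α) P := by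
  rw [MulAction.mem_stabilizer_iff]
  refine eq_of_subset_of_ncard_le ?_ (ncard_smul_set g P).ge hP
  rintro _ ⟨B, hB, rfl⟩
  simpa [Perm.smul_set_eq_image] using hg hB

theorem mapsTo_image_of_mem_stabilizer {α : Type*} {P : Set (Set α)} {g : Perm α}
    (hg : g ∈ MulAction.stabilizer (Perm α) P) : MapsTo (image g) P P := by
  intro B hB
  rw [← Perm.smul_set_eq_image, ← MulAction.mem_stabilizer_iff.mp hg]
  exact smul_mem_smul_set hB

section Rotation

variable {k : ℕ} {σ : Perm ℕ} (hσ1 : σ 1 = k)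
  (hσ : ∀ j, 2 ≤ j → j ≤ k → σ j = j - 1)
include hσ1 hσ

theorem rotation_pow_apply (t : ℕ) {x : ℕ} (hx : x ∈ Icc 1 k) :
    (σ ^ t) x ∈ Icc 1 k ∧ ((σ ^ t) x : ℤ) ≡ x - t [ZMOD k] := by
  induction t with
  | zero => simpa using hx
  | succ t ih =>
    obtain ⟨hmem, hmod⟩ := ih
    rw [pow_succ', Perm.mul_apply]
    simp only [mem_Icc] at hmem ⊢
    rcases eq_or_lt_of_le hmem.1 with h1 | h2
    · rw [← h1, hσ1]
      refine ⟨⟨by omega, le_rfl⟩, ?_⟩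
      calc (k : ℤ) ≡ 0 [ZMOD k] := Int.modulus_modEq_zero
        _ = (σ ^ t) x - 1 := by rw [← h1]; simp
        _ ≡ x - t - 1 [ZMOD k] := hmod.sub_right 1
        _ = x - ↑(t + 1) := by push_cast; ring
    · rw [hσ _ h2 hmem.2]
      refine ⟨⟨by omega, by omega⟩, ?_⟩
      rw [Nat.cast_sub h2.le, Nat.cast_one, Nat.cast_succ, ← sub_sub]
      exact hmod.sub_right 1

theorem exists_rotation_pow_apply_eq {x y : ℕ} (hx : x ∈ Icc 1 k) (hy : y ∈ Icc 1 k) :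
    ∃ t, (σ ^ t) x = y := by
  obtain ⟨hmem, hmod⟩ := rotation_pow_apply hσ1 hσ (x + k - y) hx
  refine ⟨x + k - y, eq_of_modEq_of_mem_Icc hmem hy (hmod.trans ?_)⟩
  simp only [mem_Icc] at hy
  push_cast [Nat.cast_sub (show y ≤ x + k by omega)]
  calc _ = (y : ℤ) + (-1) * k := by ring
    _ ≡ y [ZMOD k] := Int.add_mul_modulus_modEq_iff.mpr rfl

theorem modEq_ncard_of_mem_block {P : Set (Set ℕ)} (hU : ⋃₀ P = Icc 1 k)
    (hD : P.PairwiseDisjoint id) (hne : ∀ B ∈ P, B.Nonempty) (hP : MapsTo (image σ) P P)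
    {B : Set ℕ} (hB : B ∈ P) {x y : ℕ} (hx : x ∈ B) (hy : y ∈ B) :
    (x : ℤ) ≡ y [ZMOD P.ncard] := by
  have hsub : ∀ B ∈ P, B ⊆ Icc 1 k := fun B hB => hU ▸ subset_sUnion_of_mem hB
  have hiter (t : ℕ) : (image σ)^[t] B = (σ ^ t) '' B := by
    rw [← image_iterate_eq, Perm.coe_pow]
  have hmeet {t : ℕ} {B' : Set ℕ} (hB' : B' ∈ P) (ht : (σ ^ t) x ∈ B') :
      (image σ)^[t] B = B' :=
    hD.elim_set (hP.iterate t hB) hB' _ (hiter t ▸ mem_image_of_mem _ hx) ht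
  have hxk := hsub B hB hx
  obtain ⟨t, rfl⟩ := exists_rotation_pow_apply_eq hσ1 hσ hxk (hsub B hB hy)
  have hperiod_k : IsPeriodicPt (image σ) k B := by
    refine hmeet hB ?_
    obtain ⟨hmem, hmod⟩ := rotation_pow_apply hσ1 hσ k hxk
    rwa [eq_of_modEq_of_mem_Icc hmem hxk (by simpa using hmod)]
  have hpos := hperiod_k.minimalPeriod_pos (by simp only [mem_Icc] at hxk; omega)
  have hPorbit : P = (fun r => (image σ)^[r] B) '' Iio (minimalPeriod (image σ) B) := by
    refine Subset.antisymm (fun B' hB' => ?_) ?_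
    · obtain ⟨z, hz⟩ := hne B' hB'
      obtain ⟨s, rfl⟩ := exists_rotation_pow_apply_eq hσ1 hσ hxk (hsub B' hB' hz)
      refine ⟨s % minimalPeriod (image σ) B, mem_Iio.mpr (Nat.mod_lt _ hpos), ?_⟩
      simp only [iterate_mod_minimalPeriod_eq]
      exact hmeet hB' hz
    · rintro _ ⟨r, -, rfl⟩
      exact hP.iterate r hB
  have hcard : P.ncard = minimalPeriod (image σ) B := by
    rw [hPorbit, iterate_injOn_Iio_minimalPeriod.ncard_image, ncard_Iio_nat]
  have hdvd_t : (P.ncard : ℤ) ∣ t := by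
    exact_mod_cast hcard ▸ IsPeriodicPt.minimalPeriod_dvd (hmeet hB hy)
  have hdvd_k : (P.ncard : ℤ) ∣ k := by
    exact_mod_cast hcard ▸ hperiod_k.minimalPeriod_dvd
  calc (x : ℤ) ≡ x - t [ZMOD P.ncard] := (Int.modEq_iff_dvd.mpr (by simpa using hdvd_t)).symm
    _ ≡ (σ ^ t) x [ZMOD P.ncard] := ((rotation_pow_apply hσ1 hσ t hxk).2.of_dvd hdvd_k).symm

end Rotation

def residueBlock (k q r : ℕ) : Set ℕ := {x | x ∈ Icc 1 k ∧ x ≡ r [MOD q]}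

def residuePartition (k q : ℕ) : Set (Set ℕ) := range (residueBlock k q)

theorem residueBlock_congr {k q r r' : ℕ} (h : r ≡ r' [MOD q]) :
    residueBlock k q r = residueBlock k q r' := by
  ext x
  exact and_congr_right fun _ => ⟨fun hx => hx.trans h, fun hx => hx.trans h.symm⟩

theorem sUnion_residuePartition (k q : ℕ) : ⋃₀ residuePartition k q = Icc 1 k := by
  refine Subset.antisymm (sUnion_subset ?_) fun x hx => ⟨_, mem_range_self x, hx, rfl⟩
  rintro _ ⟨r, rfl⟩
  exact fun x hx => hx.1

theorem pairwiseDisjoint_residuePartition (k q : ℕ) :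
    (residuePartition k q).PairwiseDisjoint id := by
  rintro _ ⟨r, rfl⟩ _ ⟨r', rfl⟩ hne
  exact disjoint_left.mpr fun x hx hx' => hne (residueBlock_congr (hx.2.symm.trans hx'.2))

theorem ncard_residueBlock {k q : ℕ} (hq : 0 < q) (hqk : q ∣ k) (r : ℕ) :
    (residueBlock k q r).ncard = k / q := by
  have hshift :
      residueBlock k q r = Nat.succ '' ↑({j ∈ Finset.range k | j + 1 ≡ r [MOD q]}) := by
    ext x
    simp only [residueBlock, mem_ofPred_eq, mem_Icc, Finset.coe_filter, Finset.mem_range,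
      mem_image]
    constructor
    · rintro ⟨hx, hxr⟩
      exact ⟨x - 1, ⟨by omega, by rwa [Nat.sub_add_cancel hx.1]⟩, by omega⟩
    · rintro ⟨j, ⟨hj, hjr⟩, rfl⟩
      exact ⟨⟨by omega, hj⟩, hjr⟩
  -- `0` and `k` lie in the same residue class, so counting over `[1, k]` or `[0, k)` agrees
  have hk : k ≡ 0 [MOD q] := Nat.modEq_zero_iff_dvd.mpr hqk
  have hend : (0 ≡ r [MOD q]) ↔ (k ≡ r [MOD q]) := ⟨hk.trans, hk.symm.trans⟩
  have hcount := Nat.count_succ' (· ≡ r [MOD q]) k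
  rw [Nat.count_succ, if_congr hend rfl rfl, Nat.add_right_cancel_iff] at hcount
  rw [hshift, ncard_image_of_injective _ Nat.succ_injective, ncard_coe_finset,
    ← Nat.count_eq_card_filter_range, ← hcount, Nat.count_modEq_card _ hq,
    Nat.mod_eq_zero_of_dvd hqk]
  simp

theorem ncard_residuePartition {k q : ℕ} (hq : 0 < q) (hqk : q ∣ k) (hk : 0 < k) :
    (residuePartition k q).ncard = q := by
  have hrange : residuePartition k q = residueBlock k q '' Iio q := by
    refine Subset.antisymm ?_ (image_subset_range _ _)
    rintro _ ⟨r, rfl⟩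
    exact ⟨r % q, Nat.mod_lt r hq, residueBlock_congr (Nat.mod_modEq r q)⟩
  have hinj : InjOn (residueBlock k q) (Iio q) := by
    intro r hr r' hr' heq
    obtain ⟨x, hx⟩ := nonempty_of_ncard_ne_zero (s := residueBlock k q r)
      (by rw [ncard_residueBlock hq hqk]; exact (Nat.div_pos (Nat.le_of_dvd hk hqk) hq).ne')
    have hx' := heq ▸ hx
    have hrr' : r % q = r' % q := hx.2.symm.trans hx'.2
    rwa [Nat.mod_eq_of_lt hr, Nat.mod_eq_of_lt hr'] at hrr'
  rw [hrange, hinj.ncard_image, ncard_Iio_nat]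

theorem mem_stabilizer_residuePartition {k q : ℕ} (hq : 0 < q) (hqk : q ∣ k) (hk : 0 < k)
    {g : Perm ℕ} (a b : ℤ)
    (hg : ∀ x ∈ Icc 1 k, g x ∈ Icc 1 k ∧ (g x : ℤ) ≡ a * x + b [ZMOD q]) :
    g ∈ MulAction.stabilizer (Perm ℕ) (residuePartition k q) := by
  refine mem_stabilizer_of_mapsTo
    (finite_of_ncard_pos ((ncard_residuePartition hq hqk hk).symm ▸ hq)) ?_
  rintro _ ⟨r, rfl⟩
  rcases (residueBlock k q r).eq_empty_or_nonempty with he | ⟨x₀, hx₀⟩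
  · rw [he, image_empty, ← he]
    exact mem_range_self r
  have hfin : (residueBlock k q (g x₀)).Finite := (finite_Icc 1 k).subset fun x hx => hx.1
  refine ⟨g x₀, (eq_of_subset_of_ncard_le ?_ ?_ hfin).symm⟩
  · rintro _ ⟨y, hy, rfl⟩
    refine ⟨(hg y hy.1).1, Int.natCast_modEq_iff.mp ?_⟩
    have hyx : (y : ℤ) ≡ x₀ [ZMOD q] := Int.natCast_modEq_iff.mpr (hy.2.trans hx₀.2.symm)
    exact (hg y hy.1).2.trans (((hyx.mul_left a).add_right b).trans (hg x₀ hx₀.1).2.symm)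
  · rw [ncard_image_of_injective _ g.injective, ncard_residueBlock hq hqk,
      ncard_residueBlock hq hqk]

theorem prod_map_range_swap_apply {n x : ℕ} (hx : x ∈ Icc 1 (2 * n)) :
    ((List.range n).map fun i => swap (i + 1) (2 * n - i)).prod x = 2 * n + 1 - x := by
  have hl : (List.range n).map (fun i => swap (i + 1) (2 * n - i)) =
      ((List.range n).map (· + 1)).map fun j => swap j (2 * n + 1 - j) := by
    simp only [List.map_map, Function.comp_def, Nat.add_sub_add_right]
  rw [hl, prod_map_swap_sub_apply ((List.nodup_range).map (add_left_injective 1))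
    (by simp only [List.mem_map, List.mem_range]; omega)]
  simp only [mem_Icc] at hx
  rw [if_pos]
  simp only [List.mem_map, List.mem_range]
  by_cases hxn : x ≤ n
  · exact ⟨x, ⟨x - 1, by omega, by omega⟩, Or.inl rfl⟩
  · exact ⟨2 * n + 1 - x, ⟨2 * n - x, by omega, by omega⟩, Or.inr (by omega)⟩

/-- The points left fixed are `n`, `2n`, `h` and `2n - h`, each of which is congruent to its
negative under the hypotheses on `q`. -/
theorem prod_map_filter_range_swap_apply {n h q x : ℕ} {σ : Perm ℕ}
    (hσ : σ = (((List.range (n - 1)).filter fun i => decide (i + 1 ≠ h)).map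
      fun i => swap (i + 1) (2 * n - 1 - i)).prod)
    (hn : (q : ℤ) ∣ 2 * n) (hh : (q : ℤ) ∣ 2 * h) (hx : x ∈ Icc 1 (2 * n)) :
    σ x ∈ Icc 1 (2 * n) ∧ (σ x : ℤ) ≡ -x [ZMOD q] := by
  set l := (List.range (n - 1)).filter fun i => decide (i + 1 ≠ h)
  have hσ' : σ = ((l.map (· + 1)).map fun j => swap j (2 * n - j)).prod := by
    rw [hσ, List.map_map]
    exact congrArg _ (List.map_congr_left fun i _ => by
      rw [Function.comp_apply, Nat.sub_sub, Nat.add_comm 1 i])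
  have hl : ∀ j, j ∈ l.map (· + 1) ↔ 1 ≤ j ∧ j ≤ n - 1 ∧ j ≠ h := by
    intro j
    simp only [l, List.mem_map, List.mem_filter, List.mem_range, decide_eq_true_eq]
    exact ⟨by rintro ⟨i, ⟨hi, hih⟩, rfl⟩; omega,
      fun hj => ⟨j - 1, ⟨by omega, by omega⟩, by omega⟩⟩
  simp only [mem_Icc] at hx
  rw [hσ', prod_map_swap_sub_apply (((List.nodup_range).filter _).map (add_left_injective 1))
      (fun j hj => by rw [hl] at hj; omega)]
  split_ifs with hmem
  · obtain ⟨j, hj, hxj⟩ := hmem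
    rw [hl] at hj
    refine ⟨⟨by omega, by omega⟩, (Int.modEq_iff_dvd.mpr ?_).symm⟩
    rwa [Nat.cast_sub (by omega), sub_neg_eq_add, sub_add_cancel, Nat.cast_mul, Nat.cast_ofNat]
  · have hfixed : x = n ∨ x = 2 * n ∨ x = h ∨ x + h = 2 * n := by
      by_contra! hne
      by_cases hxn : x ≤ n - 1
      · exact hmem ⟨x, (hl x).mpr ⟨by omega, hxn, hne.2.2.1⟩, Or.inl rfl⟩
      · exact hmem ⟨2 * n - x, (hl _).mpr ⟨by omega, by omega, by omega⟩,
          Or.inr (by omega)⟩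
    refine ⟨⟨hx.1, hx.2⟩, (Int.modEq_iff_dvd.mpr ?_).symm⟩
    rw [sub_neg_eq_add, ← two_mul]
    rcases hfixed with rfl | rfl | rfl | hsum
    · exact hn
    · push_cast
      exact dvd_mul_of_dvd_right hn 2
    · exact hh
    · have : (2 * x : ℤ) = 2 * (2 * n) - 2 * h := by omega
      rw [this]
      exact dvd_sub (dvd_mul_of_dvd_right hn 2) hh

section ResidueStabilizer

variable {k q : ℕ} (hq : 0 < q) (hqk : q ∣ k) (hk : 0 < k)
include hq hqk hk

theorem rotation_mem_stabilizer {σ : Perm ℕ} (hσ1 : σ 1 = k)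
    (hσ : ∀ j, 2 ≤ j → j ≤ k → σ j = j - 1) :
    σ ∈ MulAction.stabilizer (Perm ℕ) (residuePartition k q) := by
  refine mem_stabilizer_residuePartition hq hqk hk 1 (-1) fun x hx => ?_
  obtain ⟨hmem, hmod⟩ := rotation_pow_apply hσ1 hσ 1 hx
  rw [pow_one] at hmem hmod
  exact ⟨hmem, by simpa [sub_eq_add_neg] using hmod.of_dvd (Int.natCast_dvd_natCast.mpr hqk)⟩

theorem swap_mem_stabilizer {a b : ℕ} (ha : a ∈ Icc 1 k) (hb : b ∈ Icc 1 k)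
    (hab : a ≡ b [MOD q]) : swap a b ∈ MulAction.stabilizer (Perm ℕ) (residuePartition k q) :=
  mem_stabilizer_residuePartition hq hqk hk 1 0 fun x hx =>
    ⟨swap_apply_mem ha hb hx, by simpa using swap_apply_modEq (Int.natCast_modEq_iff.mpr hab) x⟩

end ResidueStabilizer

theorem prod_map_range_swap_mem_stabilizer {n q : ℕ} (hq : 0 < q) (hqn : q ∣ 2 * n)
    (hn : 0 < n) :
    ((List.range n).map fun i => swap (i + 1) (2 * n - i)).prod ∈
      MulAction.stabilizer (Perm ℕ) (residuePartition (2 * n) q) := by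
  refine mem_stabilizer_residuePartition hq hqn (by omega) (-1) (2 * n + 1) fun x hx => ?_
  rw [prod_map_range_swap_apply hx]
  simp only [mem_Icc] at hx ⊢
  refine ⟨⟨by omega, by omega⟩, ?_⟩
  have hval : ((2 * n + 1 - x : ℕ) : ℤ) = -1 * x + (2 * n + 1) := by
    push_cast [Nat.cast_sub (show x ≤ 2 * n + 1 by omega)]
    ring
  rw [hval]

theorem prod_map_filter_range_swap_mem_stabilizer {n h q : ℕ} {σ : Perm ℕ}
    (hσ : σ = (((List.range (n - 1)).filter fun i => decide (i + 1 ≠ h)).map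
      fun i => swap (i + 1) (2 * n - 1 - i)).prod)
    (hq : 0 < q) (hqn : q ∣ 2 * n) (hqh : q ∣ 2 * h) (hn : 0 < n) :
    σ ∈ MulAction.stabilizer (Perm ℕ) (residuePartition (2 * n) q) :=
  mem_stabilizer_residuePartition hq hqn (by omega) (-1) 0 fun x hx => by
    simpa using
      prod_map_filter_range_swap_apply hσ (by exact_mod_cast hqn) (by exact_mod_cast hqh) hx

theorem dvd_of_modEq_two_mul_sub {m n h : ℕ} (hmn : m ∣ n) (hhn : h ≤ 2 * n)
    (hmod : (h : ℤ) ≡ (2 * n - h : ℕ) [ZMOD (2 * m : ℕ)]) : m ∣ h := by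
  have h₁ : (2 * m : ℤ) ∣ 2 * n - h - h := by
    have := hmod.dvd
    push_cast [Nat.cast_sub hhn] at this
    exact this
  have h₂ : (2 * m : ℤ) ∣ 2 * n := mul_dvd_mul_left 2 (Int.natCast_dvd_natCast.mpr hmn)
  have h₃ : (2 * m : ℤ) ∣ 2 * h := by
    have := dvd_sub h₂ h₁
    rwa [show (2 * n - (2 * n - h - h) : ℤ) = 2 * h by ring] at this
  exact Int.natCast_dvd_natCast.mp ((mul_dvd_mul_iff_left two_ne_zero).mp h₃)

theorem stmt15_general (n h m : ℕ) (hh1 : 1 ≤ h) (hh2 : h ≤ n - 1)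
    (hm : 2 ≤ m) (hmn : m ∣ n) (hnm : 2 ≤ n / m)
    (σi : Equiv.Perm ℕ)
    (hi1 : σi 1 = 2*n) (hij : ∀ j, 2 ≤ j → j ≤ 2*n → σi j = j - 1)
    (σ0 σ1 τ : Equiv.Perm ℕ)
    (hσ0 : σ0 = ((List.range n).map (fun i => Equiv.swap (i+1) (2*n - i))).prod)
    (hτ : τ = Equiv.swap h (2*n - h))
    (hσ1 : σ1 = (((List.range (n-1)).filter (fun i => decide (i + 1 ≠ h))).map
                 (fun i => Equiv.swap (i+1) (2*n - 1 - i))).prod) :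
    (∃ P : Set (Set ℕ),
      ⋃₀ P = Set.Icc 1 (2*n) ∧ P.PairwiseDisjoint id ∧ P.ncard = 2*m ∧
      (∀ B ∈ P, B.ncard = n / m) ∧
      (∀ g ∈ Subgroup.closure {σ0, σi, σ1, τ}, ∀ B ∈ P, (⇑g) '' B ∈ P))
    ↔ m ∣ h := by
  have hq : 0 < 2 * m := by omega
  have hk : 0 < 2 * n := by omega
  have hqk : 2 * m ∣ 2 * n := mul_dvd_mul_left 2 hmn
  constructor
  · rintro ⟨P, hU, hD, hcard, hBcard, hG⟩
    have hP (g : Perm ℕ) (hg : g ∈ ({σ0, σi, σ1, τ} : Set (Perm ℕ))) :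
        MapsTo (image g) P P :=
      hG g (Subgroup.subset_closure hg)
    have hne (B : Set ℕ) (hB : B ∈ P) : B.Nonempty :=
      nonempty_of_ncard_ne_zero (by rw [hBcard B hB]; omega)
    obtain ⟨B, hB, hhB⟩ : ∃ B ∈ P, h ∈ B := mem_sUnion.mp (hU ▸ ⟨hh1, by omega⟩)
    have hpartner : 2 * n - h ∈ B := mem_of_swap_image_mem hD hB (hτ ▸ hP τ (by simp) hB) hhB
      (exists_ne_of_one_lt_ncard (by rw [hBcard B hB]; omega) h)
    have hmod := modEq_ncard_of_mem_block hi1 hij hU hD hne (hP σi (by simp)) hB hhB hpartner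
    exact dvd_of_modEq_two_mul_sub hmn (by omega) (hcard ▸ hmod)
  · intro hmh
    have hqh : 2 * m ∣ 2 * h := mul_dvd_mul_left 2 hmh
    refine ⟨residuePartition (2 * n) (2 * m), sUnion_residuePartition _ _,
      pairwiseDisjoint_residuePartition _ _, ncard_residuePartition hq hqk hk, ?_,
      fun g hg => mapsTo_image_of_mem_stabilizer ((Subgroup.closure_le _).mpr ?_ hg)⟩
    · rintro _ ⟨r, rfl⟩
      rw [ncard_residueBlock hq hqk, Nat.mul_div_mul_left _ _ two_pos]
    · rintro g (rfl | rfl | rfl | rfl)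
      · exact hσ0 ▸ prod_map_range_swap_mem_stabilizer hq hqk (by omega)
      · exact rotation_mem_stabilizer hq hqk hk hi1 hij
      · exact prod_map_filter_range_swap_mem_stabilizer hσ1 hq hqk hqh (by omega)
      · refine hτ ▸ swap_mem_stabilizer hq hqk hk ⟨hh1, by omega⟩ ⟨by omega, by omega⟩
          ((Nat.modEq_iff_dvd' (by omega)).mpr ?_)
        rw [show 2 * n - h - h = 2 * n - 2 * h by omega]
        exact Nat.dvd_sub hqk hqh

theorem stmt15 (n h m : ℕ) (hn : 2 ≤ n) (hh1 : 1 ≤ h) (hh2 : h ≤ n - 1)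
    (hm : 2 ≤ m) (hmn : m ∣ n) (hnm : 2 ≤ n / m)
    (σi : Equiv.Perm ℕ)
    (hout : ∀ j, j = 0 ∨ 2*n < j → σi j = j)
    (hi1 : σi 1 = 2*n) (hij : ∀ j, 2 ≤ j → j ≤ 2*n → σi j = j - 1)
    (σ0 σ1 τ : Equiv.Perm ℕ)
    (hσ0 : σ0 = ((List.range n).map (fun i => Equiv.swap (i+1) (2*n - i))).prod)
    (hτ : τ = Equiv.swap h (2*n - h))
    (hσ1 : σ1 = (((List.range (n-1)).filter (fun i => decide (i + 1 ≠ h))).map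
                 (fun i => Equiv.swap (i+1) (2*n - 1 - i))).prod) :
    (∃ P : Set (Set ℕ),
      ⋃₀ P = Set.Icc 1 (2*n) ∧ P.PairwiseDisjoint id ∧ P.ncard = 2*m ∧
      (∀ B ∈ P, B.ncard = n / m) ∧
      (∀ g ∈ Subgroup.closure {σ0, σi, σ1, τ}, ∀ B ∈ P, (⇑g) '' B ∈ P))
    ↔ m ∣ h :=
  stmt15_general n h m hh1 hh2 hm hmn hnm σi hi1 hij σ0 σ1 τ hσ0 hτ hσ1
end

section
/- Let n ≥ 3 and let (σ0, σ∞, σ1, τ) be a special admissible 4-tuple such that the cycle type of σ1·τ consists of one 3-cycle and n−3 transpositions. Then the simultaneous conjugacy class of (σ0, σ∞, σ1, τ) in S_{2n} contains exactly three special 4-tuples. -/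
namespace Stmt17Aux

lemma pow_fix {σ : Equiv.Perm ℕ} {x : ℕ} (h : σ x = x) (m : ℕ) : (σ ^ m) x = x := by
  induction m with
  | zero => simp
  | succ m ih => rw [pow_succ, Equiv.Perm.mul_apply, h, ih]

lemma supp_conj (γ σ : Equiv.Perm ℕ) :
    {x | (γ⁻¹ * σ * γ) x ≠ x} = (⇑(γ⁻¹)) '' {x | σ x ≠ x} := by
  ext x
  simp only [Set.mem_setOf_eq, Set.mem_image, Equiv.Perm.mul_apply]
  constructor
  · intro h
    refine ⟨γ x, fun hc => h (by rw [hc, Equiv.Perm.inv_def, Equiv.symm_apply_apply]), γ.symm_apply_apply x⟩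
  · rintro ⟨y, hy, rfl⟩
    intro h
    apply hy
    have := congrArg γ h
    rw [Equiv.Perm.inv_def, Equiv.apply_symm_apply, Equiv.apply_symm_apply] at this
    rw [this]

section
variable {n : ℕ} {σi : Equiv.Perm ℕ}

lemma pow_apply (h1 : σi 1 = 2*n) (h2 : ∀ j, 2 ≤ j → j ≤ 2*n → σi j = j - 1) (hn : 1 ≤ n) :
    ∀ m x, 1 ≤ x → x ≤ 2*n → (σi ^ m) x = (x - 1 + m*(2*n-1)) % (2*n) + 1 := by
  intro m
  induction m with
  | zero =>
    intro x hx1 hx2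
    simp only [pow_zero, Equiv.Perm.one_apply, Nat.zero_mul, Nat.add_zero]
    rw [Nat.mod_eq_of_lt (by omega)]
    omega
  | succ m ih =>
    intro x hx1 hx2
    rw [pow_succ', Equiv.Perm.mul_apply, ih x hx1 hx2]
    set t := (x - 1 + m*(2*n-1)) % (2*n) with ht
    have htlt : t < 2*n := Nat.mod_lt _ (by omega)
    have key : (x - 1 + (m+1)*(2*n-1)) % (2*n) = (t + (2*n-1)) % (2*n) := by
      conv_lhs => rw [add_one_mul, ← add_assoc]
      rw [Nat.add_mod (x-1+m*(2*n-1)) (2*n-1), ht,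
        Nat.mod_eq_of_lt (show 2*n-1 < 2*n by omega)]
    rw [key]
    rcases Nat.eq_zero_or_pos t with h0 | hpos
    · rw [h0, h1]
      rw [Nat.zero_add, Nat.mod_eq_of_lt (by omega)]
      omega
    · rw [h2 (t+1) (by omega) (by omega)]
      rw [show t + (2*n-1) = (t-1) + 2*n from by omega, Nat.add_mod_right,
        Nat.mod_eq_of_lt (by omega)]
      omega


lemma pow_mem (h1 : σi 1 = 2*n) (h2 : ∀ j, 2 ≤ j → j ≤ 2*n → σi j = j - 1) (hn : 1 ≤ n)
    (m : ℕ) {x : ℕ} (hx : x ∈ Set.Icc 1 (2*n)) : (σi ^ m) x ∈ Set.Icc 1 (2*n) := by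
  rw [Set.mem_Icc] at hx ⊢
  rw [pow_apply h1 h2 hn m x hx.1 hx.2]
  have := Nat.mod_lt (x - 1 + m*(2*n-1)) (show 0 < 2*n by omega)
  omega

lemma pow_N_eq_one (h1 : σi 1 = 2*n) (h2 : ∀ j, 2 ≤ j → j ≤ 2*n → σi j = j - 1) (hn : 1 ≤ n)
    (hfix : ∀ x, x ∉ Set.Icc 1 (2*n) → σi x = x) : σi ^ (2*n) = 1 := by
  ext x
  by_cases hx : x ∈ Set.Icc 1 (2*n)
  · rw [Set.mem_Icc] at hx
    rw [pow_apply h1 h2 hn (2*n) x hx.1 hx.2]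
    rw [show x - 1 + 2*n*(2*n-1) = x - 1 + (2*n-1)*(2*n) from by ring, Nat.add_mul_mod_self_right,
      Nat.mod_eq_of_lt (by omega)]
    simp only [Equiv.Perm.one_apply]
    omega
  · rw [pow_fix (hfix x hx), Equiv.Perm.one_apply]

lemma pow_apply_N (h1 : σi 1 = 2*n) (h2 : ∀ j, 2 ≤ j → j ≤ 2*n → σi j = j - 1) (hn : 1 ≤ n)
    {k : ℕ} (hk : k < 2*n) : (σi ^ k) (2*n) = 2*n - k := by
  rw [pow_apply h1 h2 hn k (2*n) (by omega) le_rfl]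
  have e1 : k * (2*n) = k*(2*n-1) + k := by
    calc k * (2*n) = k * ((2*n-1) + 1) := by rw [show 2*n-1+1 = 2*n from by omega]
    _ = k*(2*n-1) + k := by rw [Nat.mul_succ]
  have e2 : 2*n - 1 + k*(2*n-1) = (2*n - 1 - k) + k*(2*n) := by omega
  rw [e2, Nat.add_mul_mod_self_right, Nat.mod_eq_of_lt (by omega)]
  omega

lemma pow_fix_iff (h1 : σi 1 = 2*n) (h2 : ∀ j, 2 ≤ j → j ≤ 2*n → σi j = j - 1) (hn : 1 ≤ n)
    {m x : ℕ} (hx1 : 1 ≤ x) (hx2 : x ≤ 2*n) : (σi ^ m) x = x ↔ 2*n ∣ m := by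
  rw [pow_apply h1 h2 hn m x hx1 hx2]
  constructor
  · intro h
    have h' : (x - 1 + m*(2*n-1)) % (2*n) = (x-1) % (2*n) := by
      rw [Nat.mod_eq_of_lt (show x - 1 < 2*n by omega)]; omega
    have h'' : (x-1) + m*(2*n-1) ≡ (x-1) + 0 [MOD 2*n] := by
      exact h'
    have h3 : m*(2*n-1) ≡ 0 [MOD 2*n] := Nat.ModEq.add_left_cancel' (x-1) h''
    have h4 : (2*n) ∣ m*(2*n-1) := (Nat.modEq_zero_iff_dvd).mp h3
    have hcop : Nat.Coprime (2*n) (2*n-1) := by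
      have : 2*n = (2*n-1)+1 := by omega
      rw [this]
      exact Nat.coprime_self_add_left.mpr (Nat.coprime_one_left _)
    exact hcop.dvd_of_dvd_mul_right h4
  · rintro ⟨c, rfl⟩
    rw [show x - 1 + 2*n*c*(2*n-1) = x - 1 + (c*(2*n-1))*(2*n) from by ring,
      Nat.add_mul_mod_self_right, Nat.mod_eq_of_lt (by omega)]
    omega

lemma image_Icc {δ : Equiv.Perm ℕ} (hfix : ∀ x, x ∉ Set.Icc 1 (2*n) → δ x = x) :
    (⇑δ) '' Set.Icc 1 (2*n) = Set.Icc 1 (2*n) := by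
  ext y
  constructor
  · rintro ⟨x, hx, rfl⟩
    by_contra hy
    have h := hfix (δ x) hy
    have : δ x = x := δ.injective h
    rw [this] at hy
    exact hy hx
  · intro hy
    refine ⟨δ.symm y, ?_, Equiv.apply_symm_apply δ y⟩
    by_contra h
    have h2 := hfix (δ.symm y) h
    rw [Equiv.apply_symm_apply] at h2
    rw [← h2] at h
    exact h hy

lemma inv_fix {δ : Equiv.Perm ℕ} (hfix : ∀ x, x ∉ Set.Icc 1 (2*n) → δ x = x)
    (x : ℕ) (hx : x ∉ Set.Icc 1 (2*n)) : δ⁻¹ x = x := by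
  have := hfix x hx
  conv_lhs => rw [← this]
  exact δ.symm_apply_apply x

lemma cent (h1 : σi 1 = 2*n) (h2 : ∀ j, 2 ≤ j → j ≤ 2*n → σi j = j - 1) (hn : 1 ≤ n)
    (hfixi : ∀ x, x ∉ Set.Icc 1 (2*n) → σi x = x)
    {γ : Equiv.Perm ℕ} (hγ : ∀ x, x ∉ Set.Icc 1 (2*n) → γ x = x)
    (hcom : γ * σi = σi * γ) : ∃ k, k < 2*n ∧ γ = σi ^ k := by
  have hcompow : ∀ m, γ * σi ^ m = σi ^ m * γ := fun m => (Commute.pow_right hcom m)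
  set x0 := γ (2*n) with hx0def
  have hNmem : (2*n) ∈ Set.Icc 1 (2*n) := by rw [Set.mem_Icc]; omega
  have hx0 : x0 ∈ Set.Icc 1 (2*n) := by
    by_contra h
    have := hγ x0 h
    have h2' : x0 = 2*n := γ.injective this
    rw [h2'] at h
    exact h hNmem
  rw [Set.mem_Icc] at hx0
  refine ⟨2*n - x0, by omega, ?_⟩
  ext u
  by_cases hu : u ∈ Set.Icc 1 (2*n)
  · rw [Set.mem_Icc] at hu
    have hu' : u = (σi ^ (2*n - u)) (2*n) := by
      rw [pow_apply_N h1 h2 hn (show 2*n - u < 2*n by omega)]; omega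
    have hx0' : x0 = (σi ^ (2*n - x0)) (2*n) := by
      rw [pow_apply_N h1 h2 hn (show 2*n - x0 < 2*n by omega)]; omega
    calc γ u = γ ((σi ^ (2*n - u)) (2*n)) := by rw [← hu']
    _ = (γ * σi ^ (2*n - u)) (2*n) := rfl
    _ = (σi ^ (2*n - u) * γ) (2*n) := by rw [hcompow]
    _ = (σi ^ (2*n - u)) x0 := rfl
    _ = (σi ^ (2*n - u)) ((σi ^ (2*n - x0)) (2*n)) := by rw [← hx0']
    _ = (σi ^ (2*n - u) * σi ^ (2*n - x0)) (2*n) := rfl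
    _ = (σi ^ (2*n - x0) * σi ^ (2*n - u)) (2*n) := by rw [← pow_add, ← pow_add, Nat.add_comm]
    _ = (σi ^ (2*n - x0)) ((σi ^ (2*n - u)) (2*n)) := rfl
    _ = (σi ^ (2*n - x0)) u := by rw [← hu']
  · rw [hγ u hu, pow_fix (hfixi u hu)]

end

end Stmt17Aux

namespace Stmt17Aux2

lemma card_F_aux {n : ℕ} (hn : 3 ≤ n) {σ1 τ : Equiv.Perm ℕ} {a b : ℕ}
    (hab : a ≠ b) (haI : a ∈ Set.Icc 1 (2*n))
    (hτ : τ = Equiv.swap a b)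
    (hσ1supp : {x | σ1 x ≠ x} ⊆ Set.Icc 1 (2*n))
    (hσ1card : {x | σ1 x ≠ x}.ncard = 2*(n-2))
    (hfa : σ1 a = a) (hfb : σ1 b ≠ b) :
    {x | x ∈ Set.Icc 1 (2*n) ∧ σ1 x = x ∧ τ x = x}.ncard = 3 := by
  have hIccfin : (Set.Icc 1 (2*n)).Finite := Set.finite_Icc _ _
  have hIcccard : (Set.Icc 1 (2*n)).ncard = 2*n := by
    rw [← Finset.coe_Icc, Set.ncard_coe_finset, Nat.card_Icc]; omega
  have hset : {x | x ∈ Set.Icc 1 (2*n) ∧ σ1 x = x ∧ τ x = x}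
      = (Set.Icc 1 (2*n) \ {x | σ1 x ≠ x}) \ {a} := by
    ext x
    simp only [Set.mem_setOf_eq, Set.mem_diff, Set.mem_singleton_iff, not_not, hτ]
    constructor
    · rintro ⟨hI, hf, hτx⟩
      refine ⟨⟨hI, hf⟩, ?_⟩
      rintro rfl
      rw [Equiv.swap_apply_left] at hτx
      exact hab hτx.symm
    · rintro ⟨⟨hI, hf⟩, hxa⟩
      refine ⟨hI, hf, ?_⟩
      have hxb : x ≠ b := by rintro rfl; exact hfb hf
      exact Equiv.swap_apply_of_ne_of_ne hxa hxb
  rw [hset]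
  have hD : (Set.Icc 1 (2*n) \ {x | σ1 x ≠ x}).ncard = 4 := by
    rw [Set.ncard_diff hσ1supp (hIccfin.subset hσ1supp), hIcccard, hσ1card]; omega
  have haD : a ∈ Set.Icc 1 (2*n) \ {x | σ1 x ≠ x} := ⟨haI, by simp [hfa]⟩
  rw [Set.ncard_diff_singleton_of_mem haD, hD]

lemma exactly_one {n : ℕ} (hn : 3 ≤ n) {σ1 τ : Equiv.Perm ℕ} {a b : ℕ}
    (hab : a ≠ b)
    (hτ : τ = Equiv.swap a b)
    (hσ1sq : σ1 * σ1 = 1)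
    (hσ1supp : {x | σ1 x ≠ x} ⊆ Set.Icc 1 (2*n))
    (hσ1card : {x | σ1 x ≠ x}.ncard = 2*(n-2))
    (hcard : {x | (σ1 * τ) x ≠ x}.ncard = 2*n - 3) :
    (σ1 a = a ∧ σ1 b ≠ b) ∨ (σ1 a ≠ a ∧ σ1 b = b) := by
  have hIccfin : (Set.Icc 1 (2*n)).Finite := Set.finite_Icc _ _
  have hsuppfin : {x | σ1 x ≠ x}.Finite := hIccfin.subset hσ1supp
  have hinv : ∀ x, σ1 (σ1 x) = x := by
    intro x
    have := Equiv.ext_iff.mp hσ1sq x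
    simpa [Equiv.Perm.mul_apply] using this
  by_cases ha : σ1 a = a <;> by_cases hb : σ1 b = b
  · exfalso
    have hset : {x | (σ1 * τ) x ≠ x} = {x | σ1 x ≠ x} ∪ {a, b} := by
      ext x
      simp only [Set.mem_setOf_eq, Set.mem_union, Set.mem_insert_iff,
        Set.mem_singleton_iff, Equiv.Perm.mul_apply, hτ]
      by_cases hxa : x = a
      · subst hxa
        rw [Equiv.swap_apply_left, hb]
        constructor
        · intro _; right; left; rfl
        · intro _; exact fun h => hab h.symm
      · by_cases hxb : x = b
        · subst hxb
          rw [Equiv.swap_apply_right, ha]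
          constructor
          · intro _; right; right; rfl
          · intro _; exact hab
        · rw [Equiv.swap_apply_of_ne_of_ne hxa hxb]
          constructor
          · intro h; left; exact h
          · rintro (h | h | h)
            · exact h
            · exact absurd h hxa
            · exact absurd h hxb
    have hdisj : Disjoint {x | σ1 x ≠ x} ({a, b} : Set ℕ) := by
      rw [Set.disjoint_right]
      rintro x (rfl | rfl) <;> simp [ha, hb]
    have := hcard
    rw [hset, Set.ncard_union_eq hdisj hsuppfin ((Set.finite_singleton b).insert a),
      hσ1card, Set.ncard_pair hab] at this
    omega
  · exact Or.inl ⟨ha, hb⟩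
  · exact Or.inr ⟨ha, hb⟩
  · exfalso
    by_cases hab2 : σ1 a = b
    · have hba2 : σ1 b = a := by rw [← hab2, hinv]
      have hset : {x | (σ1 * τ) x ≠ x} = {x | σ1 x ≠ x} \ {a, b} := by
        ext x
        simp only [Set.mem_setOf_eq, Set.mem_diff, Set.mem_insert_iff,
          Set.mem_singleton_iff, Equiv.Perm.mul_apply, hτ]
        by_cases hxa : x = a
        · subst hxa
          rw [Equiv.swap_apply_left, hba2]
          simp
        · by_cases hxb : x = b
          · subst hxb
            rw [Equiv.swap_apply_right, hab2]
            simp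
          · rw [Equiv.swap_apply_of_ne_of_ne hxa hxb]
            constructor
            · intro h; exact ⟨h, by tauto⟩
            · rintro ⟨h, _⟩; exact h
      have habsub : ({a, b} : Set ℕ) ⊆ {x | σ1 x ≠ x} := by
        rintro x (rfl | rfl) <;> simp_all
      have := hcard
      rw [hset, Set.ncard_diff habsub ((Set.finite_singleton b).insert a),
        hσ1card, Set.ncard_pair hab] at this
      omega
    · have hba2 : σ1 b ≠ a := by
        intro h
        apply hab2
        rw [← h, hinv]
      have hset : {x | (σ1 * τ) x ≠ x} = {x | σ1 x ≠ x} := by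
        ext x
        simp only [Set.mem_setOf_eq, Equiv.Perm.mul_apply, hτ]
        by_cases hxa : x = a
        · subst hxa
          rw [Equiv.swap_apply_left]
          constructor
          · intro _; exact ha
          · intro _; exact hba2
        · by_cases hxb : x = b
          · subst hxb
            rw [Equiv.swap_apply_right]
            constructor
            · intro _; exact hb
            · intro _; exact fun h => hab2 h
          · rw [Equiv.swap_apply_of_ne_of_ne hxa hxb]
      have := hcard
      rw [hset, hσ1card] at this
      omega

end Stmt17Aux2

namespace Stmt17Aux2

lemma card_supp_three {n : ℕ} (hn : 3 ≤ n) {σ π : Equiv.Perm ℕ} {u v w : ℕ}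
    (huv : u ≠ v) (hvw : v ≠ w) (huw : u ≠ w)
    (hπfix : ∀ x, π x ≠ x → x ∉ ({u, v, w} : Set ℕ))
    (hπcard : {x | π x ≠ x}.ncard = 2*(n-3))
    (heq : σ = π * (Equiv.swap u v * Equiv.swap v w))
    (hsupp : {x | σ x ≠ x} ⊆ Set.Icc 1 (2*n)) :
    {x | σ x ≠ x}.ncard = 2*n - 3 := by
  have hfu : π u = u := by
    by_contra h; exact hπfix u h (by simp)
  have hfv : π v = v := by
    by_contra h; exact hπfix v h (by simp)
  have hfw : π w = w := by
    by_contra h; exact hπfix w h (by simp)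
  have hρu : (Equiv.swap u v * Equiv.swap v w) u = v := by
    rw [Equiv.Perm.mul_apply, Equiv.swap_apply_of_ne_of_ne huv huw, Equiv.swap_apply_left]
  have hρv : (Equiv.swap u v * Equiv.swap v w) v = w := by
    rw [Equiv.Perm.mul_apply, Equiv.swap_apply_left,
      Equiv.swap_apply_of_ne_of_ne (Ne.symm huw) (Ne.symm hvw)]
  have hρw : (Equiv.swap u v * Equiv.swap v w) w = u := by
    rw [Equiv.Perm.mul_apply, Equiv.swap_apply_right, Equiv.swap_apply_right]
  have hset : {x | σ x ≠ x} = {x | π x ≠ x} ∪ {u, v, w} := by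
    ext x
    have happ : ∀ y, σ y = π ((Equiv.swap u v * Equiv.swap v w) y) := by
      intro y; rw [heq]; rfl
    simp only [Set.mem_setOf_eq, Set.mem_union, Set.mem_insert_iff, Set.mem_singleton_iff, happ]
    rcases eq_or_ne x u with rfl | hxu
    · rw [hρu, hfv]
      constructor
      · intro _; right; left; rfl
      · intro _; exact Ne.symm huv
    · rcases eq_or_ne x v with rfl | hxv
      · rw [hρv, hfw]
        constructor
        · intro _; right; right; left; rfl
        · intro _; exact Ne.symm hvw
      · rcases eq_or_ne x w with rfl | hxw
        · rw [hρw, hfu]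
          constructor
          · intro _; right; right; right; rfl
          · intro _; exact huw
        · rw [show (Equiv.swap u v * Equiv.swap v w) x = x from by
            rw [Equiv.Perm.mul_apply, Equiv.swap_apply_of_ne_of_ne hxv hxw,
              Equiv.swap_apply_of_ne_of_ne hxu hxv]]
          constructor
          · intro h; left; exact h
          · rintro (h | h | h | h)
            · exact h
            · exact absurd h hxu
            · exact absurd h hxv
            · exact absurd h hxw
  have hπsub : {x | π x ≠ x} ⊆ {x | σ x ≠ x} := by
    rw [hset]; exact Set.subset_union_left
  have hπfin : {x | π x ≠ x}.Finite :=
    ((Set.finite_Icc 1 (2*n)).subset hsupp).subset hπsub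
  have htriple : ({u, v, w} : Set ℕ).ncard = 3 :=
    Set.ncard_eq_three.mpr ⟨u, v, w, huv, huw, hvw, rfl⟩
  have hdisj : Disjoint {x | π x ≠ x} ({u, v, w} : Set ℕ) := by
    rw [Set.disjoint_left]
    exact fun x hx => hπfix x hx
  rw [hset, Set.ncard_union_eq hdisj hπfin
    (((Set.finite_singleton w).insert v).insert u), hπcard, htriple]
  omega

end Stmt17Aux2


/-- An admissible tuple is special if `σ∞` is the explicit cycle `j ↦ j-1` (`1 ↦ 2n`) and both
`σ1` and `τ` fix `2n`. -/
def IsSpecial (n : ℕ) (σ0 σi σ1 τ : Equiv.Perm ℕ) : Prop :=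
  IsAdmissible n σ0 σi σ1 τ ∧
  σi 1 = 2*n ∧ (∀ j, 2 ≤ j → j ≤ 2*n → σi j = j - 1) ∧
  σ1 (2*n) = 2*n ∧ τ (2*n) = 2*n

/-- `σ` has cycle type consisting of one 3-cycle and `n-3` transpositions. -/
def HasThreeCycleType (n : ℕ) (σ : Equiv.Perm ℕ) : Prop :=
  ∃ a b c π : _, a ≠ b ∧ b ≠ c ∧ a ≠ c ∧ (π : Equiv.Perm ℕ) * π = 1 ∧
    (∀ x, π x ≠ x → x ∉ ({a, b, c} : Set ℕ)) ∧ {x | π x ≠ x}.ncard = 2*(n-3) ∧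
    σ = π * (Equiv.swap a b * Equiv.swap b c)

theorem stmt17 (n : ℕ) (hn : 3 ≤ n) (σ0 σi σ1 τ : Equiv.Perm ℕ)
    (hsp : IsSpecial n σ0 σi σ1 τ) (h3 : HasThreeCycleType n (σ1 * τ)) :
    {p : Equiv.Perm ℕ × Equiv.Perm ℕ × Equiv.Perm ℕ × Equiv.Perm ℕ |
      (∃ γ : Equiv.Perm ℕ, {x | γ x ≠ x} ⊆ Set.Icc 1 (2*n) ∧
        p = (γ⁻¹ * σ0 * γ, γ⁻¹ * σi * γ, γ⁻¹ * σ1 * γ, γ⁻¹ * τ * γ)) ∧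
      IsSpecial n p.1 p.2.1 p.2.2.1 p.2.2.2}.ncard = 3 := by
  obtain ⟨⟨hprod, hσ0sq, hσ0supp, hcyc, hσisupp, hσ1sq, hσ1supp, hσ1card,
    a, b, hab, haI, hbI, hτ⟩, h1, h2, hσ1N, hτN⟩ := hsp
  have hn1 : 1 ≤ n := by omega
  have hfixi : ∀ x, x ∉ Set.Icc 1 (2*n) → σi x = x := by
    intro x hx
    by_contra h
    have hmem : x ∈ {y | σi y ≠ y} := h
    rw [hσisupp] at hmem
    exact hx hmem
  have hpowN := Stmt17Aux.pow_N_eq_one h1 h2 hn1 hfixi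
  have haI' := Set.mem_Icc.mp haI
  have hbI' := Set.mem_Icc.mp hbI
  -- cardinality of the fixed-point set
  have hsupp1τ : {x | (σ1 * τ) x ≠ x} ⊆ Set.Icc 1 (2*n) := by
    intro x hx
    have hx' : σ1 (τ x) ≠ x := hx
    by_cases hτx : τ x = x
    · rw [hτx] at hx'
      exact hσ1supp hx'
    · rw [hτ] at hτx
      rcases (Equiv.swap_apply_ne_self_iff.mp hτx).2 with rfl | rfl
      · exact haI
      · exact hbI
  obtain ⟨u, v, w, π, huv, hvw, huw, hπsq, hπfix, hπcard, hπeq⟩ := h3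
  have hcard1τ : {x | (σ1 * τ) x ≠ x}.ncard = 2*n - 3 :=
    Stmt17Aux2.card_supp_three hn huv hvw huw hπfix hπcard hπeq hsupp1τ
  have hFcard : {x | x ∈ Set.Icc 1 (2*n) ∧ σ1 x = x ∧ τ x = x}.ncard = 3 := by
    rcases Stmt17Aux2.exactly_one hn hab hτ hσ1sq hσ1supp hσ1card hcard1τ with ⟨ha, hb⟩ | ⟨ha, hb⟩
    · exact Stmt17Aux2.card_F_aux hn hab haI hτ hσ1supp hσ1card ha hb
    · have hτ' : τ = Equiv.swap b a := by rw [hτ, Equiv.swap_comm]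
      exact Stmt17Aux2.card_F_aux hn (Ne.symm hab) hbI hτ' hσ1supp hσ1card hb ha
  -- the set equals the image of the fixed-point set
  have hSset : {p : Equiv.Perm ℕ × Equiv.Perm ℕ × Equiv.Perm ℕ × Equiv.Perm ℕ |
      (∃ γ : Equiv.Perm ℕ, {x | γ x ≠ x} ⊆ Set.Icc 1 (2*n) ∧
        p = (γ⁻¹ * σ0 * γ, γ⁻¹ * σi * γ, γ⁻¹ * σ1 * γ, γ⁻¹ * τ * γ)) ∧
      IsSpecial n p.1 p.2.1 p.2.2.1 p.2.2.2}
      = (fun x => ((σi^(2*n-x))⁻¹ * σ0 * σi^(2*n-x), (σi^(2*n-x))⁻¹ * σi * σi^(2*n-x),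
          (σi^(2*n-x))⁻¹ * σ1 * σi^(2*n-x), (σi^(2*n-x))⁻¹ * τ * σi^(2*n-x)))
        '' {x | x ∈ Set.Icc 1 (2*n) ∧ σ1 x = x ∧ τ x = x} := by
    ext p
    simp only [Set.mem_setOf_eq, Set.mem_image]
    constructor
    · rintro ⟨⟨γ, hγsupp, rfl⟩, hps⟩
      simp only [IsSpecial, IsAdmissible] at hps
      obtain ⟨⟨hprod', hσ0sq', hσ0supp', hcyc', hσisupp', hσ1sq', hσ1supp', hσ1card',
        a', b', hab', haI2, hbI2, hτ'⟩, h1', h2', hσ1N', hτN'⟩ := hps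
      have hγ : ∀ x, x ∉ Set.Icc 1 (2*n) → γ x = x := by
        intro x hx
        by_contra h
        exact hx (hγsupp h)
      have hγi : γ⁻¹ * σi * γ = σi := by
        ext x
        by_cases hx : x ∈ Set.Icc 1 (2*n)
        · have hx' := Set.mem_Icc.mp hx
          rcases eq_or_ne x 1 with rfl | hx1
          · rw [h1', h1]
          · rw [h2' x (by omega) hx'.2, h2 x (by omega) hx'.2]
        · have hL : (γ⁻¹ * σi * γ) x = x := by
            by_contra h
            have hmem : x ∈ {y | (γ⁻¹ * σi * γ) y ≠ y} := h
            rw [hσisupp'] at hmem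
            exact hx hmem
          rw [hL, hfixi x hx]
      have hcomm : γ * σi = σi * γ := by
        have e : γ * (γ⁻¹ * σi * γ) = σi * γ := by group
        rw [hγi] at e
        exact e
      obtain ⟨k, hk, rfl⟩ := Stmt17Aux.cent h1 h2 hn1 hfixi hγ hcomm
      have hγN : (σi^k) (2*n) = 2*n - k := Stmt17Aux.pow_apply_N h1 h2 hn1 hk
      have hσ1x : σ1 (2*n - k) = 2*n - k := by
        have e := congrArg (⇑(σi^k)) hσ1N'
        simp only [Equiv.Perm.mul_apply, Equiv.Perm.inv_def, Equiv.apply_symm_apply] at e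
        rw [hγN] at e
        exact e
      have hτx : τ (2*n - k) = 2*n - k := by
        have e := congrArg (⇑(σi^k)) hτN'
        simp only [Equiv.Perm.mul_apply, Equiv.Perm.inv_def, Equiv.apply_symm_apply] at e
        rw [hγN] at e
        exact e
      refine ⟨2*n - k, ⟨Set.mem_Icc.mpr (by omega), hσ1x, hτx⟩, ?_⟩
      simp only [show 2*n - (2*n - k) = k from by omega]
    · rintro ⟨x, ⟨hxI, hσ1x, hτx⟩, rfl⟩
      have hxI' := Set.mem_Icc.mp hxI
      set γ : Equiv.Perm ℕ := σi^(2*n-x) with hγdef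
      have hγfix : ∀ y, y ∉ Set.Icc 1 (2*n) → γ y = y := fun y hy => Stmt17Aux.pow_fix (hfixi y hy) _
      have hγinvfix : ∀ y, y ∉ Set.Icc 1 (2*n) → γ⁻¹ y = y := Stmt17Aux.inv_fix hγfix
      have himg : (⇑(γ⁻¹)) '' Set.Icc 1 (2*n) = Set.Icc 1 (2*n) := Stmt17Aux.image_Icc hγinvfix
      have hγi2 : γ⁻¹ * σi * γ = σi := by
        have hcom : σi * γ = γ * σi := ((Commute.refl σi).pow_right _).eq
        calc γ⁻¹ * σi * γ = γ⁻¹ * (σi * γ) := by rw [mul_assoc]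
        _ = γ⁻¹ * (γ * σi) := by rw [hcom]
        _ = σi := by group
      have hγN : γ (2*n) = x := by
        rw [hγdef, Stmt17Aux.pow_apply_N h1 h2 hn1 (show 2*n - x < 2*n from by omega)]
        omega
      have hγsupp : {y | γ y ≠ y} ⊆ Set.Icc 1 (2*n) := by
        intro y hy
        by_contra h
        exact hy (hγfix y h)
      refine ⟨⟨γ, hγsupp, rfl⟩, ?_⟩
      simp only [IsSpecial, IsAdmissible]
      refine ⟨⟨?_, ?_, ?_, ?_, ?_, ?_, ?_, ?_, ?_⟩, ?_, ?_, ?_, ?_⟩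
      · show (γ⁻¹*σ0*γ) * (γ⁻¹*σi*γ) * (γ⁻¹*σ1*γ) * (γ⁻¹*τ*γ) = 1
        have e : (γ⁻¹*σ0*γ) * (γ⁻¹*σi*γ) * (γ⁻¹*σ1*γ) * (γ⁻¹*τ*γ)
            = γ⁻¹*(σ0*σi*σ1*τ)*γ := by group
        rw [e, hprod]
        group
      · show (γ⁻¹*σ0*γ) * (γ⁻¹*σ0*γ) = 1
        have e : (γ⁻¹*σ0*γ) * (γ⁻¹*σ0*γ) = γ⁻¹*(σ0*σ0)*γ := by group
        rw [e, hσ0sq]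
        group
      · show {y | (γ⁻¹*σ0*γ) y ≠ y} = Set.Icc 1 (2*n)
        rw [Stmt17Aux.supp_conj, hσ0supp, himg]
      · show (γ⁻¹*σi*γ).IsCycle
        rw [hγi2]; exact hcyc
      · show {y | (γ⁻¹*σi*γ) y ≠ y} = Set.Icc 1 (2*n)
        rw [hγi2]; exact hσisupp
      · show (γ⁻¹*σ1*γ) * (γ⁻¹*σ1*γ) = 1
        have e : (γ⁻¹*σ1*γ) * (γ⁻¹*σ1*γ) = γ⁻¹*(σ1*σ1)*γ := by group
        rw [e, hσ1sq]
        group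
      · show {y | (γ⁻¹*σ1*γ) y ≠ y} ⊆ Set.Icc 1 (2*n)
        rw [Stmt17Aux.supp_conj]
        exact (Set.image_mono hσ1supp).trans himg.subset
      · show {y | (γ⁻¹*σ1*γ) y ≠ y}.ncard = 2*(n-2)
        rw [Stmt17Aux.supp_conj, Set.ncard_image_of_injective _ (Equiv.injective _)]
        exact hσ1card
      · refine ⟨γ⁻¹ a, γ⁻¹ b, fun h => hab (γ⁻¹.injective h), ?_, ?_, ?_⟩
        · rw [← himg]; exact ⟨a, haI, rfl⟩
        · rw [← himg]; exact ⟨b, hbI, rfl⟩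
        · show γ⁻¹*τ*γ = Equiv.swap (γ⁻¹ a) (γ⁻¹ b)
          rw [hτ, Equiv.swap_apply_apply, inv_inv]
      · show (γ⁻¹*σi*γ) 1 = 2*n
        rw [hγi2]; exact h1
      · show ∀ j, 2 ≤ j → j ≤ 2*n → (γ⁻¹*σi*γ) j = j - 1
        rw [hγi2]; exact h2
      · show (γ⁻¹*σ1*γ) (2*n) = 2*n
        calc (γ⁻¹*σ1*γ) (2*n) = γ⁻¹ (σ1 (γ (2*n))) := rfl
        _ = γ⁻¹ (γ (2*n)) := by rw [hγN, hσ1x, ← hγN]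
        _ = 2*n := γ.symm_apply_apply (2*n)
      · show (γ⁻¹*τ*γ) (2*n) = 2*n
        calc (γ⁻¹*τ*γ) (2*n) = γ⁻¹ (τ (γ (2*n))) := rfl
        _ = γ⁻¹ (γ (2*n)) := by rw [hγN, hτx, ← hγN]
        _ = 2*n := γ.symm_apply_apply (2*n)
  -- injectivity of the map on the fixed-point set
  have key : ∀ x y : ℕ, x ∈ {x | x ∈ Set.Icc 1 (2*n) ∧ σ1 x = x ∧ τ x = x} →
      y ∈ {x | x ∈ Set.Icc 1 (2*n) ∧ σ1 x = x ∧ τ x = x} →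
      ((σi^(2*n-x))⁻¹ * σ0 * σi^(2*n-x), (σi^(2*n-x))⁻¹ * σi * σi^(2*n-x),
        (σi^(2*n-x))⁻¹ * σ1 * σi^(2*n-x), (σi^(2*n-x))⁻¹ * τ * σi^(2*n-x))
      = ((σi^(2*n-y))⁻¹ * σ0 * σi^(2*n-y), (σi^(2*n-y))⁻¹ * σi * σi^(2*n-y),
        (σi^(2*n-y))⁻¹ * σ1 * σi^(2*n-y), (σi^(2*n-y))⁻¹ * τ * σi^(2*n-y)) →
      2*n - x < 2*n - y → False := by
    intro x y hxF hyF hTxy hlt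
    obtain ⟨hxI, hσ1x, hτx⟩ := hxF
    obtain ⟨hyI, hσ1y, hτy⟩ := hyF
    have hxI' := Set.mem_Icc.mp hxI
    have hyI' := Set.mem_Icc.mp hyI
    simp only [Prod.mk.injEq] at hTxy
    obtain ⟨-, -, E3, E4⟩ := hTxy
    set k := 2*n - x with hkdef
    set l := 2*n - y with hldef
    have hm1 : 1 ≤ l - k := by omega
    have hm2 : l - k < 2*n := by omega
    have hl : σi^l = σi^(l-k) * σi^k := by rw [← pow_add]; congr 1; omega
    have hc1 : σi^(l-k) * σ1 = σ1 * σi^(l-k) := by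
      have hA : σi^l * ((σi^l)⁻¹ * σ1 * σi^l) * (σi^l)⁻¹ = σ1 := by group
      have hB : σi^l * ((σi^k)⁻¹ * σ1 * σi^k) * (σi^l)⁻¹
          = σi^(l-k) * σ1 * (σi^(l-k))⁻¹ := by rw [hl]; group
      rw [E3, hA] at hB
      calc σi^(l-k) * σ1 = (σi^(l-k) * σ1 * (σi^(l-k))⁻¹) * σi^(l-k) := by group
      _ = σ1 * σi^(l-k) := by rw [← hB]
    have hc2 : σi^(l-k) * τ = τ * σi^(l-k) := by
      have hA : σi^l * ((σi^l)⁻¹ * τ * σi^l) * (σi^l)⁻¹ = τ := by group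
      have hB : σi^l * ((σi^k)⁻¹ * τ * σi^k) * (σi^l)⁻¹
          = σi^(l-k) * τ * (σi^(l-k))⁻¹ := by rw [hl]; group
      rw [E4, hA] at hB
      calc σi^(l-k) * τ = (σi^(l-k) * τ * (σi^(l-k))⁻¹) * σi^(l-k) := by group
      _ = τ * σi^(l-k) := by rw [← hB]
    have hS : Equiv.swap ((σi^(l-k)) a) ((σi^(l-k)) b) = Equiv.swap a b := by
      rw [Equiv.swap_apply_apply]
      calc σi^(l-k) * Equiv.swap a b * (σi^(l-k))⁻¹
          = σi^(l-k) * τ * (σi^(l-k))⁻¹ := by rw [hτ]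
      _ = τ * σi^(l-k) * (σi^(l-k))⁻¹ := by rw [hc2]
      _ = τ := by group
      _ = Equiv.swap a b := hτ
    have hma : (σi^(l-k)) a ≠ a := by
      intro h
      rw [Stmt17Aux.pow_fix_iff h1 h2 hn1 haI'.1 haI'.2] at h
      have := Nat.le_of_dvd (by omega) h
      omega
    have hub : (σi^(l-k)) a = b := by
      rcases eq_or_ne ((σi^(l-k)) a) b with h | h
      · exact h
      · exfalso
        have e1 : (Equiv.swap a b) ((σi^(l-k)) a) = (σi^(l-k)) a :=
          Equiv.swap_apply_of_ne_of_ne hma h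
        rw [← hS, Equiv.swap_apply_left] at e1
        exact hab ((σi^(l-k)).injective e1.symm)
    have hvb : (σi^(l-k)) b = a := by
      have e1 : (Equiv.swap a b) ((σi^(l-k)) a) = (σi^(l-k)) b := by
        rw [← hS, Equiv.swap_apply_left]
      rw [hub, Equiv.swap_apply_right] at e1
      exact e1.symm
    have hdvd2 : 2*n ∣ (l-k) + (l-k) := by
      rw [← Stmt17Aux.pow_fix_iff h1 h2 hn1 haI'.1 haI'.2 (m := (l-k)+(l-k))]
      rw [pow_add, Equiv.Perm.mul_apply, hub, hvb]
    have hmn : l - k = n := by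
      obtain ⟨c, hc⟩ := hdvd2
      match c, hc with
      | 0, hc => omega
      | 1, hc => omega
      | (c+2), hc =>
        have h4 : 2*n*2 ≤ 2*n*(c+2) := Nat.mul_le_mul_left _ (by omega)
        generalize hQ : 2*n*(c+2) = Q at hc h4
        omega
    rw [hmn] at hc1 hub hvb
    have hinvol : ∀ z, (σi^n) ((σi^n) z) = z := by
      intro z
      rw [← Equiv.Perm.mul_apply, ← pow_add, show n + n = 2*n from by omega, hpowN,
        Equiv.Perm.one_apply]
    have hι : ∀ z, z ∈ {x | x ∈ Set.Icc 1 (2*n) ∧ σ1 x = x ∧ τ x = x} →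
        (σi^n) z ∈ {x | x ∈ Set.Icc 1 (2*n) ∧ σ1 x = x ∧ τ x = x} := by
      intro z hz
      obtain ⟨hzI, hσ1z, hτz⟩ := hz
      refine ⟨Stmt17Aux.pow_mem h1 h2 hn1 n hzI, ?_, ?_⟩
      · have e := Equiv.ext_iff.mp hc1 z
        simp only [Equiv.Perm.mul_apply] at e
        rw [hσ1z] at e
        exact e.symm
      · have hza : (σi^n) z ≠ a := by
          intro h
          have hzb' : z = b := by
            have e := congrArg (⇑(σi^n)) h
            rw [hinvol, hub] at e
            exact e
          rw [hzb', hτ, Equiv.swap_apply_right] at hτz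
          exact hab hτz
        have hzb : (σi^n) z ≠ b := by
          intro h
          have hza' : z = a := by
            have e := congrArg (⇑(σi^n)) h
            rw [hinvol, hvb] at e
            exact e
          rw [hza', hτ, Equiv.swap_apply_left] at hτz
          exact hab hτz.symm
        rw [hτ]
        exact Equiv.swap_apply_of_ne_of_ne hza hzb
    have hιne : ∀ z, z ∈ {x | x ∈ Set.Icc 1 (2*n) ∧ σ1 x = x ∧ τ x = x} → (σi^n) z ≠ z := by
      intro z hz h
      obtain ⟨hzI, -, -⟩ := hz
      have hzI' := Set.mem_Icc.mp hzI
      rw [Stmt17Aux.pow_fix_iff h1 h2 hn1 hzI'.1 hzI'.2] at h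
      have := Nat.le_of_dvd (by omega) h
      omega
    obtain ⟨e1, e2, e3, h12, h13, h23, hFeq⟩ := Set.ncard_eq_three.mp hFcard
    have he1 : e1 ∈ {x | x ∈ Set.Icc 1 (2*n) ∧ σ1 x = x ∧ τ x = x} := by
      rw [hFeq]; exact Set.mem_insert _ _
    have he2 : e2 ∈ {x | x ∈ Set.Icc 1 (2*n) ∧ σ1 x = x ∧ τ x = x} := by
      rw [hFeq]; exact Set.mem_insert_of_mem _ (Set.mem_insert _ _)
    have he3 : e3 ∈ {x | x ∈ Set.Icc 1 (2*n) ∧ σ1 x = x ∧ τ x = x} := by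
      rw [hFeq]; exact Set.mem_insert_of_mem _ (Set.mem_insert_of_mem _ rfl)
    have hin : ∀ z, z ∈ {x | x ∈ Set.Icc 1 (2*n) ∧ σ1 x = x ∧ τ x = x} →
        z = e1 ∨ z = e2 ∨ z = e3 := by
      intro z hz
      rw [hFeq] at hz
      simpa using hz
    rcases hin _ (hι e1 he1) with hA | hA | hA
    · exact hιne e1 he1 hA
    · have hB : (σi^n) e2 = e1 := by rw [← hA, hinvol]
      rcases hin _ (hι e3 he3) with hC | hC | hC
      · have e := congrArg (⇑(σi^n)) hC
        rw [hinvol, hA] at e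
        exact h23 e.symm
      · have e := congrArg (⇑(σi^n)) hC
        rw [hinvol, hB] at e
        exact h13 e.symm
      · exact hιne e3 he3 hC
    · have hB : (σi^n) e3 = e1 := by rw [← hA, hinvol]
      rcases hin _ (hι e2 he2) with hC | hC | hC
      · have e := congrArg (⇑(σi^n)) hC
        rw [hinvol, hA] at e
        exact h23 e
      · exact hιne e2 he2 hC
      · have e := congrArg (⇑(σi^n)) hC
        rw [hinvol, hB] at e
        exact h12 e.symm
  have hinj : Set.InjOn
      (fun x => ((σi^(2*n-x))⁻¹ * σ0 * σi^(2*n-x), (σi^(2*n-x))⁻¹ * σi * σi^(2*n-x),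
          (σi^(2*n-x))⁻¹ * σ1 * σi^(2*n-x), (σi^(2*n-x))⁻¹ * τ * σi^(2*n-x)))
      {x | x ∈ Set.Icc 1 (2*n) ∧ σ1 x = x ∧ τ x = x} := by
    intro x hxF y hyF hTxy
    simp only at hTxy
    rcases Nat.lt_trichotomy (2*n - x) (2*n - y) with h | h | h
    · exact (key x y hxF hyF hTxy h).elim
    · obtain ⟨hxI, -, -⟩ := hxF
      obtain ⟨hyI, -, -⟩ := hyF
      have hxI' := Set.mem_Icc.mp hxI
      have hyI' := Set.mem_Icc.mp hyI
      omega
    · exact (key y x hyF hxF hTxy.symm h).elim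
  rw [hSset, Set.ncard_image_of_injOn hinj, hFcard]
end
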